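/- arXiv:1803.10898 — 6 statements merged into one kernel-verified Lean document; each statement's English description precedes it below -/
import Mathlib

section
/- Suppose the primal problem P has an optimal solution x* and the Slater condition holds (there exists x̃ ∈ X with g(x̃,ξ) < 0 for all ξ ∈ Ξ). Then there exists a finite nonnegative Borel measure Λ* on Ξ such that (x*, Λ*) is a saddle point of the Lagrangian L on X × M₊(Ξ), i.e. L(x*,Λ) ≤ L(x*,Λ*) ≤ L(x,Λ*) for all x ∈ X and Λ ∈ M₊(Ξ); in particular min_{x∈X} sup_{Λ∈M₊(Ξ)} L(x,Λ) = sup_{Λ∈M₊(Ξ)} inf_{x∈X} L(x,Λ) = L(x*,Λ*). -/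
/-!
If `xs` were not optimal for any finite subfamily of constraints, every `(finrank + 1)`-tuple of
constraints would admit a strictly feasible point with value below `f xs`; by compactness of the
space of tuples these values stay below a uniform `c < f xs`, and Helly's theorem for the compact
convex sets `{x ∈ X | f x ≤ c ∧ g x ξ ≤ 0}` yields a feasible point of value `≤ c`, a contradiction.
For the resulting finite convex program, separating `0` from the open convex set
`{v | ∃ x ∈ X, ∀ i, F i x < v i}` (the Fan–Glicksberg–Hoffman alternative) together with the
Slater point gives Lagrange multipliers. The corresponding weighted sum of Dirac masses is the
multiplier measure; complementary slackness makes `(xs, Λs)` a saddle point of the Lagrangian,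
and a saddle point gives both minimax identities.
-/

open MeasureTheory Set

theorem nonneg_right_of_forall_add_mul_pos {a b : ℝ} (h : ∀ t : ℝ, 0 ≤ t → 0 < a + t * b) :
    0 ≤ b := by
  by_contra! hb
  have := h (a / -b) (div_nonneg (by simpa using (h 0 le_rfl).le) (neg_nonneg.2 hb.le))
  rw [div_neg, neg_mul, div_mul_cancel₀ a hb.ne] at this
  simp at this

theorem nonneg_left_of_forall_add_mul_pos {a b : ℝ} (h : ∀ t : ℝ, 0 < t → 0 < a + t * b) :
    0 ≤ a := by
  have hlim : Filter.Tendsto (fun t : ℝ => a + t * b) (nhdsWithin 0 (Ioi 0)) (nhds a) :=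
    ((continuous_const.add (continuous_id.mul continuous_const)).tendsto' 0 a
      (by simp)).mono_left nhdsWithin_le_nhds
  exact ge_of_tendsto hlim (eventually_nhdsWithin_of_forall fun t ht => (h t ht).le)

theorem isOpen_setOf_exists_forall_lt {ι E : Type*} [Finite ι] {X : Set E} (F : ι → E → ℝ) :
    IsOpen {v : ι → ℝ | ∃ x ∈ X, ∀ i, F i x < v i} := by
  have : {v : ι → ℝ | ∃ x ∈ X, ∀ i, F i x < v i} = ⋃ x ∈ X, univ.pi fun i => Ioi (F i x) := by
    ext; simp
  rw [this]
  exact isOpen_biUnion fun x _ => isOpen_set_pi finite_univ fun i _ => isOpen_Ioi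

theorem convex_setOf_exists_forall_lt {ι E : Type*} [AddCommGroup E] [Module ℝ E] {X : Set E}
    (hX : Convex ℝ X) {F : ι → E → ℝ} (hF : ∀ i, ConvexOn ℝ X (F i)) :
    Convex ℝ {v : ι → ℝ | ∃ x ∈ X, ∀ i, F i x < v i} := by
  rintro p ⟨xp, hxp, hp⟩ q ⟨xq, hxq, hq⟩ a b ha hb hab
  refine ⟨a • xp + b • xq, hX hxp hxq ha hb hab, fun i => ?_⟩
  have hgap := convex_Ioi (0 : ℝ) (sub_pos.2 (hp i)) (sub_pos.2 (hq i)) ha hb hab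
  have hconv := (hF i).2 hxp hxq ha hb hab
  simp only [smul_eq_mul, mem_Ioi, Pi.add_apply, Pi.smul_apply] at hgap hconv ⊢
  linarith

theorem exists_nonneg_weights_of_not_exists_forall_neg {ι E : Type*} [Fintype ι]
    [AddCommGroup E] [Module ℝ E] {X : Set E} (hX : Convex ℝ X) (hXne : X.Nonempty)
    {F : ι → E → ℝ} (hF : ∀ i, ConvexOn ℝ X (F i)) (hno : ¬∃ x ∈ X, ∀ i, F i x < 0) :
    ∃ w : ι → ℝ, 0 ≤ w ∧ w ≠ 0 ∧ ∀ x ∈ X, 0 ≤ ∑ i, w i * F i x := by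
  classical
  set C : Set (ι → ℝ) := {v | ∃ x ∈ X, ∀ i, F i x < v i}
  obtain ⟨ℓ, hℓ⟩ := geometric_hahn_banach_point_open (x := 0)
    (convex_setOf_exists_forall_lt hX hF) (isOpen_setOf_exists_forall_lt F)
    fun ⟨x, hx, h0⟩ => hno ⟨x, hx, h0⟩
  simp only [map_zero] at hℓ
  obtain ⟨x₀, hx₀⟩ := hXne
  have hmem : ∀ x ∈ X, ∀ t : ℝ, 0 < t → (fun i => F i x) + t • (1 : ι → ℝ) ∈ C := fun x hx t ht =>
    ⟨x, hx, fun i => by simpa using ht⟩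
  set e : ι → ι → ℝ := fun i j => if i = j then 1 else 0
  set w : ι → ℝ := fun i => ℓ (e i)
  have hw : ∀ v, ℓ v = ∑ i, w i * v i := fun v => by
    simpa [mul_comm] using (ℓ : (ι → ℝ) →ₗ[ℝ] ℝ).pi_apply_eq_sum_univ v
  refine ⟨w, fun j => ?_, fun hw0 => ?_, fun x hx => ?_⟩
  · refine nonneg_right_of_forall_add_mul_pos (a := ℓ ((fun i => F i x₀) + (1 : ι → ℝ)))
      fun t ht => ?_
    have := hℓ _ (?_ : (fun i => F i x₀) + (1 : ι → ℝ) + t • e j ∈ C)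
    · simpa [w] using this
    · refine ⟨x₀, hx₀, fun i => ?_⟩
      have : 0 ≤ t * e j i := mul_nonneg ht (by positivity)
      simp only [Pi.add_apply, Pi.one_apply, Pi.smul_apply, smul_eq_mul]
      linarith
  · have := hℓ _ (hmem x₀ hx₀ 1 one_pos)
    simp [hw, hw0] at this
  · have : 0 ≤ ℓ fun i => F i x := nonneg_left_of_forall_add_mul_pos (b := ℓ 1) fun t ht => by
      simpa using hℓ _ (hmem x hx t ht)
    simpa [hw] using this

theorem exists_lagrange_multipliers_of_slater {ι E : Type*} [Fintype ι] [AddCommGroup E]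
    [Module ℝ E] {X : Set E} {f : E → ℝ} {G : ι → E → ℝ}
    (hf : ConvexOn ℝ X f) (hG : ∀ i, ConvexOn ℝ X (G i)) {a : ℝ}
    (ha : ∀ x ∈ X, (∀ i, G i x < 0) → a ≤ f x) {x₀ : E} (hx₀ : x₀ ∈ X)
    (hslater : ∀ i, G i x₀ < 0) :
    ∃ u : ι → ℝ, 0 ≤ u ∧ ∀ x ∈ X, a ≤ f x + ∑ i, u i * G i x := by
  -- the objective is the constraint indexed by `none`
  set F : Option ι → E → ℝ := fun j x => j.elim (f x - a) fun i => G i x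
  have hF : ∀ j, ConvexOn ℝ X (F j)
    | none => hf.sub (concaveOn_const a hf.1)
    | some i => hG i
  obtain ⟨w, hw0, hw, hwF⟩ := exists_nonneg_weights_of_not_exists_forall_neg hf.1 ⟨x₀, hx₀⟩ hF
    fun ⟨x, hx, hFx⟩ => (ha x hx fun i => hFx (some i)).not_gt (sub_neg.1 (hFx none))
  simp only [Fintype.sum_option, F, Option.elim] at hwF
  have hwpos : 0 < w none := by
    refine (hw0 none).lt_of_ne' fun h0 => hw (funext fun j => ?_)
    have hterm : ∀ i, w (some i) * G i x₀ ≤ 0 := fun i =>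
      mul_nonpos_of_nonneg_of_nonpos (hw0 _) (hslater i).le
    have hzero := (Finset.sum_eq_zero_iff_of_nonpos fun i _ => hterm i).1
      (le_antisymm (Finset.sum_nonpos fun i _ => hterm i) (by simpa [h0] using hwF x₀ hx₀))
    rcases j with _ | i
    · exact h0
    · simpa [(hslater i).ne] using hzero i (Finset.mem_univ i)
  refine ⟨fun i => w (some i) / w none, fun i => div_nonneg (hw0 _) hwpos.le, fun x hx => ?_⟩
  have key : w none * a ≤ w none * (f x + ∑ i, w (some i) / w none * G i x) := by
    rw [mul_add, Finset.mul_sum]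
    simp only [← mul_assoc, mul_div_cancel₀ _ hwpos.ne']
    linarith [hwF x hx]
  exact le_of_mul_le_mul_left key hwpos

theorem exists_lt_forall_exists_le_of_compactSpace {T α : Type*} [TopologicalSpace T]
    [CompactSpace T] {Y : Set α} {φ : α → ℝ} {a : ℝ} {U : α → Set T}
    (hU : ∀ y ∈ Y, IsOpen (U y)) (hcover : ∀ t, ∃ y ∈ Y, φ y < a ∧ t ∈ U y) :
    ∃ c < a, ∀ t, ∃ y ∈ Y, φ y ≤ c ∧ t ∈ U y := by
  obtain ⟨S, hSY, hSfin, hS⟩ := isCompact_univ.elim_finite_subcover_image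
    (b := {y ∈ Y | φ y < a}) (fun y hy => hU y hy.1) fun t _ =>
      let ⟨y, hy, hya, ht⟩ := hcover t; mem_biUnion ⟨hy, hya⟩ ht
  rcases S.eq_empty_or_nonempty with rfl | hSne
  · exact ⟨a - 1, by linarith, fun t => by simpa using hS (mem_univ t)⟩
  obtain ⟨y₀, hy₀, hmax⟩ := Set.exists_max_image S φ hSfin hSne
  refine ⟨φ y₀, (hSY hy₀).2, fun t => ?_⟩
  obtain ⟨y, hy, ht⟩ := mem_iUnion₂.1 (hS (mem_univ t))
  exact ⟨y, (hSY hy).1, hmax y hy, ht⟩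

section SemiInfinite

variable {E T : Type*} [AddCommGroup E] [Module ℝ E] [TopologicalSpace E]
  {X : Set E} {Ξ : Set T} {f : E → ℝ} {g : E → T → ℝ}

theorem exists_feasible_of_forall_tuple [FiniteDimensional ℝ E] [T2Space E]
    (hXc : IsCompact X)
    (hf : ConvexOn ℝ X f) (hfc : ContinuousOn f X) (hg : ∀ ξ ∈ Ξ, ConvexOn ℝ X (g · ξ))
    (hgc : ∀ ξ ∈ Ξ, ContinuousOn (g · ξ) X) (hΞ : Ξ.Nonempty) {c : ℝ}
    (htuple : ∀ τ : Fin (Module.finrank ℝ E + 1) → T, (∀ i, τ i ∈ Ξ) →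
      ∃ y ∈ X, f y ≤ c ∧ ∀ i, g y (τ i) ≤ 0) :
    ∃ x ∈ X, f x ≤ c ∧ ∀ ξ ∈ Ξ, g x ξ ≤ 0 := by
  classical
  have hclosed : ∀ φ : E → ℝ, ContinuousOn φ X → ∀ r, IsClosed {x ∈ X | φ x ≤ r} :=
    fun φ hφ r => hφ.preimage_isClosed_of_isClosed hXc.isClosed isClosed_Iic
  set F : Ξ → Set E := fun ξ => {x ∈ X | f x ≤ c} ∩ {x ∈ X | g x ξ ≤ 0}
  have hFconv : ∀ ξ, Convex ℝ (F ξ) := fun ξ =>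
    (hf.convex_le c).inter ((hg ξ ξ.2).convex_le 0)
  have hFcomp : ∀ ξ, IsCompact (F ξ) := fun ξ =>
    hXc.of_isClosed_subset ((hclosed f hfc c).inter (hclosed _ (hgc ξ ξ.2) 0))
      (inter_subset_left.trans (sep_subset _ _))
  have hFinter : ∀ I : Finset Ξ, I.card ≤ Module.finrank ℝ E + 1 → (⋂ ξ ∈ I, F ξ).Nonempty := by
    intro I hI
    rcases isEmpty_or_nonempty I with hIe | hIne
    · simp [Finset.isEmpty_coe_sort.1 hIe]
    -- list the points of `I` as a tuple of length `finrank ℝ E + 1`, with repetitions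
    obtain ⟨e⟩ := Function.Embedding.nonempty_of_card_le (α := I) (β := Fin _) (by simpa using hI)
    set τ : Fin (Module.finrank ℝ E + 1) → Ξ := fun j => (Function.invFun e j : I)
    obtain ⟨y, hyX, hyc, hyg⟩ := htuple (fun j => τ j) fun j => (τ j).2
    refine ⟨y, mem_iInter₂.2 fun ξ hξ => ⟨⟨hyX, hyc⟩, hyX, ?_⟩⟩
    simpa [τ, Function.leftInverse_invFun e.injective ⟨ξ, hξ⟩] using hyg (e ⟨ξ, hξ⟩)
  obtain ⟨x, hx⟩ := Convex.helly_theorem_compact' hFconv hFcomp hFinter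
  obtain ⟨ξ₀, hξ₀⟩ := hΞ
  have hxF : ∀ ξ, x ∈ F ξ := mem_iInter.1 hx
  exact ⟨x, (hxF ⟨ξ₀, hξ₀⟩).1.1, (hxF ⟨ξ₀, hξ₀⟩).1.2, fun ξ hξ => (hxF ⟨ξ, hξ⟩).2.2⟩

theorem exists_finite_subproblem [FiniteDimensional ℝ E] [T2Space E] [TopologicalSpace T]
    (hXc : IsCompact X) (hΞc : IsCompact Ξ)
    (hf : ConvexOn ℝ X f) (hfc : ContinuousOn f X) (hg : ∀ ξ ∈ Ξ, ConvexOn ℝ X (g · ξ))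
    (hgc : ∀ ξ ∈ Ξ, ContinuousOn (g · ξ) X) (hgξ : ∀ x ∈ X, ContinuousOn (g x) Ξ) {a : ℝ}
    (ha : ∀ x ∈ X, (∀ ξ ∈ Ξ, g x ξ ≤ 0) → a ≤ f x) :
    ∃ (k : ℕ) (τ : Fin k → T), (∀ i, τ i ∈ Ξ) ∧ ∀ x ∈ X, (∀ i, g x (τ i) < 0) → a ≤ f x := by
  rcases Ξ.eq_empty_or_nonempty with rfl | hΞ
  · exact ⟨0, Fin.elim0, Fin.elim0, fun x hx _ => ha x hx (by simp)⟩
  by_contra! h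
  have : CompactSpace Ξ := isCompact_iff_compactSpace.1 hΞc
  obtain ⟨c, hca, hc⟩ := exists_lt_forall_exists_le_of_compactSpace (Y := X) (φ := f)
    (U := fun y => {τ : Fin (Module.finrank ℝ E + 1) → Ξ | ∀ i, g y (τ i) < 0})
    (fun y hy => by
      simp only [ofPred_forall]
      exact isOpen_iInter_of_finite fun i =>
        isOpen_lt ((hgξ y hy).domRestrict.comp (continuous_apply i)) continuous_const)
    fun τ => by
      obtain ⟨y, hy, hyg, hya⟩ := h _ (fun i => τ i) fun i => (τ i).2
      exact ⟨y, hy, hya, hyg⟩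
  obtain ⟨x, hxX, hxc, hxg⟩ := exists_feasible_of_forall_tuple hXc hf hfc hg hgc hΞ
    fun τ hτ => by
      obtain ⟨y, hy, hyc, hyg⟩ := hc fun i => ⟨τ i, hτ i⟩
      exact ⟨y, hy, hyc, fun i => (hyg i).le⟩
  exact (ha x hxX hxg).not_gt (hxc.trans_lt hca)

end SemiInfinite

theorem integral_sum_smul_dirac {α ι : Type*} [MeasurableSpace α] [MeasurableSingletonClass α]
    [Fintype ι] (τ : ι → α) {w : ι → ℝ} (hw : 0 ≤ w) (φ : α → ℝ) :
    ∫ x, φ x ∂(∑ i, ENNReal.ofReal (w i) • Measure.dirac (τ i)) = ∑ i, w i * φ (τ i) := by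
  rw [integral_finsetSum_measure fun i _ =>
    (integrable_dirac enorm_lt_top).smul_measure ENNReal.ofReal_ne_top]
  simp [integral_smul_measure, integral_dirac, ENNReal.toReal_ofReal (hw _)]

theorem exists_measure_multiplier {E T : Type*} [AddCommGroup E] [Module ℝ E] [TopologicalSpace E]
    [FiniteDimensional ℝ E] [T2Space E] [TopologicalSpace T] [MeasurableSpace T]
    [MeasurableSingletonClass T] {X : Set E} {Ξ : Set T} {f : E → ℝ} {g : E → T → ℝ}
    (hXc : IsCompact X) (hΞc : IsCompact Ξ)
    (hf : ConvexOn ℝ X f) (hfc : ContinuousOn f X) (hg : ∀ ξ ∈ Ξ, ConvexOn ℝ X (g · ξ))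
    (hgc : ∀ ξ ∈ Ξ, ContinuousOn (g · ξ) X) (hgξ : ∀ x ∈ X, ContinuousOn (g x) Ξ) {a : ℝ}
    (ha : ∀ x ∈ X, (∀ ξ ∈ Ξ, g x ξ ≤ 0) → a ≤ f x) {x₀ : E} (hx₀ : x₀ ∈ X)
    (hslater : ∀ ξ ∈ Ξ, g x₀ ξ < 0) :
    ∃ Λ : Measure T, IsFiniteMeasure Λ ∧ Λ Ξᶜ = 0 ∧ ∀ x ∈ X, a ≤ f x + ∫ ξ in Ξ, g x ξ ∂Λ := by
  obtain ⟨k, τ, hτ, hτa⟩ := exists_finite_subproblem hXc hΞc hf hfc hg hgc hgξ ha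
  obtain ⟨u, hu, hua⟩ := exists_lagrange_multipliers_of_slater (G := fun i x => g x (τ i)) hf
    (fun i => hg _ (hτ i)) hτa hx₀ fun i => hslater _ (hτ i)
  set Λ : Measure T := ∑ i, ENNReal.ofReal (u i) • Measure.dirac (τ i)
  have : ∀ i, IsFiniteMeasure (ENNReal.ofReal (u i) • Measure.dirac (τ i)) := fun i =>
    (Measure.dirac _).smul_finite ENNReal.ofReal_ne_top
  have hΛΞ : Λ Ξᶜ = 0 := by simp [Λ, Measure.dirac_apply, hτ]
  refine ⟨Λ, inferInstance, hΛΞ, fun x hx => ?_⟩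
  rw [Measure.restrict_eq_self_of_ae_mem (mem_ae_iff.2 hΛΞ), integral_sum_smul_dirac τ hu]
  exact hua x hx

section Saddle

variable {α β γ : Type*} [CompleteLattice γ] {A : Set α} {B : Set β} {L : α → β → γ}
  {a : α} {b : β}

theorem iInf_iSup_eq_of_isSaddlePoint (ha : a ∈ A) (hb : b ∈ B)
    (hleft : ∀ b' ∈ B, L a b' ≤ L a b) (hright : ∀ a' ∈ A, L a b ≤ L a' b) :
    ⨅ a' ∈ A, ⨆ b' ∈ B, L a' b' = L a b :=
  le_antisymm (iInf₂_le_of_le a ha (iSup₂_le hleft))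
    (le_iInf₂ fun a' ha' => le_iSup₂_of_le b hb (hright a' ha'))

theorem iSup_iInf_eq_of_isSaddlePoint (ha : a ∈ A) (hb : b ∈ B)
    (hleft : ∀ b' ∈ B, L a b' ≤ L a b) (hright : ∀ a' ∈ A, L a b ≤ L a' b) :
    ⨆ b' ∈ B, ⨅ a' ∈ A, L a' b' = L a b :=
  le_antisymm (iSup₂_le fun b' hb' => iInf₂_le_of_le a ha (hleft b' hb'))
    (le_iSup₂_of_le b hb (le_iInf₂ hright))

end Saddle

/-- Nonnegative finite Borel measures on `Ξ` are modelled as finite measures `Λ` on `ℝ^d` with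
`Λ Ξᶜ = 0`. -/
theorem stmt_0_general {m d : ℕ}
    (X : Set (EuclideanSpace ℝ (Fin m))) (Ξ : Set (EuclideanSpace ℝ (Fin d)))
    (f : EuclideanSpace ℝ (Fin m) → ℝ)
    (g : EuclideanSpace ℝ (Fin m) → EuclideanSpace ℝ (Fin d) → ℝ)
    (hXcomp : IsCompact X) (hΞcomp : IsCompact Ξ)
    (hfconv : ConvexOn ℝ X f) (hfcont : ContinuousOn f X)
    (hgconv : ∀ ξ ∈ Ξ, ConvexOn ℝ X fun x => g x ξ)
    (hgcontx : ∀ ξ ∈ Ξ, ContinuousOn (fun x => g x ξ) X)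
    (hgcontξ : ∀ x ∈ X, ContinuousOn (fun ξ => g x ξ) Ξ)
    -- `xs` is an optimal solution of the primal problem `P`
    (xs : EuclideanSpace ℝ (Fin m)) (hxsX : xs ∈ X)
    (hxsfeas : ∀ ξ ∈ Ξ, g xs ξ ≤ 0)
    (hxsopt : ∀ x ∈ X, (∀ ξ ∈ Ξ, g x ξ ≤ 0) → f xs ≤ f x)
    -- Slater condition
    (xt : EuclideanSpace ℝ (Fin m)) (hxt : xt ∈ X)
    (hSlater : ∀ ξ ∈ Ξ, g xt ξ < 0) :
    ∃ Λs : Measure (EuclideanSpace ℝ (Fin d)), IsFiniteMeasure Λs ∧ Λs Ξᶜ = 0 ∧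
      -- `(xs, Λs)` is a saddle point of `L` on `X × M₊(Ξ)`
      (∀ Λ : Measure (EuclideanSpace ℝ (Fin d)), IsFiniteMeasure Λ → Λ Ξᶜ = 0 →
        f xs + ∫ ξ in Ξ, g xs ξ ∂Λ ≤ f xs + ∫ ξ in Ξ, g xs ξ ∂Λs) ∧
      (∀ x ∈ X, f xs + ∫ ξ in Ξ, g xs ξ ∂Λs ≤ f x + ∫ ξ in Ξ, g x ξ ∂Λs) ∧
      -- min-sup equals L(xs, Λs)
      (⨅ x ∈ X, ⨆ (Λ : Measure (EuclideanSpace ℝ (Fin d))) (_ : IsFiniteMeasure Λ)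
            (_ : Λ Ξᶜ = 0), ((f x + ∫ ξ in Ξ, g x ξ ∂Λ : ℝ) : EReal))
          = ((f xs + ∫ ξ in Ξ, g xs ξ ∂Λs : ℝ) : EReal) ∧
      -- sup-inf equals L(xs, Λs)
      (⨆ (Λ : Measure (EuclideanSpace ℝ (Fin d))) (_ : IsFiniteMeasure Λ) (_ : Λ Ξᶜ = 0),
            ⨅ x ∈ X, ((f x + ∫ ξ in Ξ, g x ξ ∂Λ : ℝ) : EReal))
          = ((f xs + ∫ ξ in Ξ, g xs ξ ∂Λs : ℝ) : EReal) := by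
  obtain ⟨Λs, hΛsfin, hΛsΞ, hΛs⟩ := exists_measure_multiplier hXcomp hΞcomp hfconv hfcont hgconv
    hgcontx hgcontξ hxsopt hxt hSlater
  have hfeas : ∀ Λ : Measure (EuclideanSpace ℝ (Fin d)), ∫ ξ in Ξ, g xs ξ ∂Λ ≤ 0 := fun _ =>
    setIntegral_nonpos hΞcomp.isClosed.measurableSet hxsfeas
  have hslack : ∫ ξ in Ξ, g xs ξ ∂Λs = 0 := le_antisymm (hfeas Λs) (by linarith [hΛs xs hxsX])
  have hleft : ∀ Λ : Measure (EuclideanSpace ℝ (Fin d)), IsFiniteMeasure Λ → Λ Ξᶜ = 0 →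
      f xs + ∫ ξ in Ξ, g xs ξ ∂Λ ≤ f xs + ∫ ξ in Ξ, g xs ξ ∂Λs := fun Λ _ _ => by
    linarith [hfeas Λ]
  have hright : ∀ x ∈ X, f xs + ∫ ξ in Ξ, g xs ξ ∂Λs ≤ f x + ∫ ξ in Ξ, g x ξ ∂Λs := by
    simpa [hslack] using hΛs
  set L : EuclideanSpace ℝ (Fin m) → Measure (EuclideanSpace ℝ (Fin d)) → EReal :=
    fun x Λ => ((f x + ∫ ξ in Ξ, g x ξ ∂Λ : ℝ) : EReal)
  set B : Set (Measure (EuclideanSpace ℝ (Fin d))) := {Λ | IsFiniteMeasure Λ ∧ Λ Ξᶜ = 0}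
  have hB : Λs ∈ B := ⟨hΛsfin, hΛsΞ⟩
  have hleft' : ∀ Λ ∈ B, L xs Λ ≤ L xs Λs := fun Λ hΛ =>
    EReal.coe_le_coe_iff.2 (hleft Λ hΛ.1 hΛ.2)
  have hright' : ∀ x ∈ X, L xs Λs ≤ L x Λs := fun x hx => EReal.coe_le_coe_iff.2 (hright x hx)
  have h₁ := iInf_iSup_eq_of_isSaddlePoint hxsX hB hleft' hright'
  have h₂ := iSup_iInf_eq_of_isSaddlePoint hxsX hB hleft' hright'
  simp only [B, mem_ofPred_eq, iSup_and, L] at h₁ h₂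
  exact ⟨Λs, hΛsfin, hΛsΞ, hleft, hright, h₁, h₂⟩

/-- Existence of a saddle point of the Lagrangian for the semi-infinite program, given an
optimal primal solution and the Slater condition.  Nonnegative finite Borel measures on `Ξ`
are modelled as measures `Λ` on `ℝ^d` with `IsFiniteMeasure Λ` and `Λ Ξᶜ = 0`;  the
Lagrangian is `L(x,Λ) = f x + ∫_Ξ g(x,ξ) dΛ(ξ)`. -/
theorem stmt_0 {m d : ℕ}
    (X : Set (EuclideanSpace ℝ (Fin m))) (Ξ : Set (EuclideanSpace ℝ (Fin d)))
    (f : EuclideanSpace ℝ (Fin m) → ℝ)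
    (g : EuclideanSpace ℝ (Fin m) → EuclideanSpace ℝ (Fin d) → ℝ)
    (hXconv : Convex ℝ X) (hXcomp : IsCompact X) (hΞcomp : IsCompact Ξ)
    (hfconv : ConvexOn ℝ X f) (hfcont : ContinuousOn f X)
    (hgconv : ∀ ξ ∈ Ξ, ConvexOn ℝ X fun x => g x ξ)
    (hgcontx : ∀ ξ ∈ Ξ, ContinuousOn (fun x => g x ξ) X)
    (hgcontξ : ∀ x ∈ X, ContinuousOn (fun ξ => g x ξ) Ξ)
    -- `xs` is an optimal solution of the primal problem `P`
    (xs : EuclideanSpace ℝ (Fin m)) (hxsX : xs ∈ X)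
    (hxsfeas : ∀ ξ ∈ Ξ, g xs ξ ≤ 0)
    (hxsopt : ∀ x ∈ X, (∀ ξ ∈ Ξ, g x ξ ≤ 0) → f xs ≤ f x)
    -- Slater condition
    (xt : EuclideanSpace ℝ (Fin m)) (hxt : xt ∈ X)
    (hSlater : ∀ ξ ∈ Ξ, g xt ξ < 0) :
    ∃ Λs : Measure (EuclideanSpace ℝ (Fin d)), IsFiniteMeasure Λs ∧ Λs Ξᶜ = 0 ∧
      -- `(xs, Λs)` is a saddle point of `L` on `X × M₊(Ξ)`
      (∀ Λ : Measure (EuclideanSpace ℝ (Fin d)), IsFiniteMeasure Λ → Λ Ξᶜ = 0 →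
        f xs + ∫ ξ in Ξ, g xs ξ ∂Λ ≤ f xs + ∫ ξ in Ξ, g xs ξ ∂Λs) ∧
      (∀ x ∈ X, f xs + ∫ ξ in Ξ, g xs ξ ∂Λs ≤ f x + ∫ ξ in Ξ, g x ξ ∂Λs) ∧
      -- min-sup equals L(xs, Λs)
      (⨅ x ∈ X, ⨆ (Λ : Measure (EuclideanSpace ℝ (Fin d))) (_ : IsFiniteMeasure Λ)
            (_ : Λ Ξᶜ = 0), ((f x + ∫ ξ in Ξ, g x ξ ∂Λ : ℝ) : EReal))
          = ((f xs + ∫ ξ in Ξ, g xs ξ ∂Λs : ℝ) : EReal) ∧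
      -- sup-inf equals L(xs, Λs)
      (⨆ (Λ : Measure (EuclideanSpace ℝ (Fin d))) (_ : IsFiniteMeasure Λ) (_ : Λ Ξᶜ = 0),
            ⨅ x ∈ X, ((f x + ∫ ξ in Ξ, g x ξ ∂Λ : ℝ) : EReal))
          = ((f xs + ∫ ξ in Ξ, g xs ξ ∂Λs : ℝ) : EReal) :=
  stmt_0_general X Ξ f g hXcomp hΞcomp hfconv hfcont hgconv hgcontx hgcontξ xs hxsX hxsfeas hxsopt
    xt hxt hSlater
end

section
/- For any two finite nonnegative Borel measures Λ, Γ on a compact set Ξ ⊂ ℝ^d, B(Λ,Γ) ≥ 0, and B(Λ,Γ) = 0 if and only if Λ = Γ. -/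
/-!
Since `Λ` and `Γ` are carried by `Ξ`, `B(Λ,Γ)` is the Kullback–Leibler divergence of finite
measures, `∫ (f log f − f + 1) dΓ` with `f = dΛ/dΓ`. The integrand is nonnegative and vanishes
only at `f = 1` (Gibbs' inequality and its converse).
-/

open MeasureTheory Set
open scoped Classical

noncomputable section

/-- Kullback–Leibler divergence `D(φ,ϕ)` of measures on `Ξ`: equal to
`∫_Ξ log(dφ/dϕ) dφ` when `φ ≪ ϕ` and the log-density is `φ`-integrable on `Ξ`,
and `+∞` otherwise. -/
def KLdiv {E : Type*} [MeasurableSpace E] (Ξ : Set E) (φ ϕ : Measure E) : EReal :=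
  if φ ≪ ϕ ∧ IntegrableOn (fun ξ => Real.log (φ.rnDeriv ϕ ξ).toReal) Ξ φ
  then ((∫ ξ in Ξ, Real.log (φ.rnDeriv ϕ ξ).toReal ∂φ : ℝ) : EReal)
  else ⊤

/-- The prox function `B(Λ,Γ)` for nonnegative measures on `Ξ`:
`∫_Ξ log(dΛ/dΓ) dΛ − (Λ(Ξ) − Γ(Ξ))` when `Λ ≪ Γ` and `∫_Ξ |log(dΛ/dΓ)| dΛ < ∞`,
and `+∞` otherwise. -/
def Bprox {E : Type*} [MeasurableSpace E] (Ξ : Set E) (Λ Γ : Measure E) : EReal :=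
  if Λ ≪ Γ ∧ IntegrableOn (fun ξ => Real.log (Λ.rnDeriv Γ ξ).toReal) Ξ Λ
  then (((∫ ξ in Ξ, Real.log (Λ.rnDeriv Γ ξ).toReal ∂Λ) - ((Λ Ξ).toReal - (Γ Ξ).toReal) : ℝ) : EReal)
  else ⊤

/-- `H(ρ, ρ') = ρ log(ρ/ρ') − ρ + ρ'` (with `0 log 0 = 0`, automatic since
`Real.log 0 = 0`). -/
def Hfun (ρ ρ' : ℝ) : ℝ := ρ * Real.log (ρ / ρ') - ρ + ρ'

namespace MeasureTheory.Measure

variable {E : Type*} [MeasurableSpace E] {Ξ : Set E} {μ : Measure E}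

lemma restrict_eq_self_of_measure_compl_eq_zero (h : μ Ξᶜ = 0) : μ.restrict Ξ = μ :=
  restrict_eq_self_of_ae_mem (mem_ae_iff.mpr h)

lemma measure_eq_measure_univ_of_measure_compl_eq_zero (h : μ Ξᶜ = 0) : μ Ξ = μ univ := by
  rw [← restrict_apply_univ, restrict_eq_self_of_measure_compl_eq_zero h]

end MeasureTheory.Measure

section Bprox

open InformationTheory Measure

variable {E : Type*} [MeasurableSpace E] {Ξ : Set E} {Λ Γ : Measure E}

lemma Bprox_eq_Bprox_univ (hΛ : Λ Ξᶜ = 0) (hΓ : Γ Ξᶜ = 0) : Bprox Ξ Λ Γ = Bprox univ Λ Γ := by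
  simp only [Bprox, IntegrableOn, restrict_eq_self_of_measure_compl_eq_zero hΛ, restrict_univ,
    measure_eq_measure_univ_of_measure_compl_eq_zero hΛ,
    measure_eq_measure_univ_of_measure_compl_eq_zero hΓ]

lemma Bprox_univ_eq_klDiv [IsFiniteMeasure Λ] [IsFiniteMeasure Γ] :
    Bprox univ Λ Γ = klDiv Λ Γ := by
  rw [Bprox, IntegrableOn, restrict_univ]
  split_ifs with h
  · rw [klDiv_of_ac_of_integrable h.1 h.2, EReal.coe_ennreal_ofReal,
      max_eq_left (integral_llr_add_sub_measure_univ_nonneg h.1 h.2)]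
    simp only [llr, measureReal_def, sub_sub_eq_add_sub]
  · rw [klDiv_eq_top_iff.mpr fun hac hint ↦ h ⟨hac, hint⟩, EReal.coe_ennreal_top]

end Bprox

theorem stmt_5_general {d : ℕ} (Ξ : Set (EuclideanSpace ℝ (Fin d)))
    (Λ Γ : Measure (EuclideanSpace ℝ (Fin d)))
    (hΛfin : IsFiniteMeasure Λ) (hΓfin : IsFiniteMeasure Γ)
    (hΛsupp : Λ Ξᶜ = 0) (hΓsupp : Γ Ξᶜ = 0) :
    0 ≤ Bprox Ξ Λ Γ ∧ (Bprox Ξ Λ Γ = 0 ↔ Λ = Γ) := by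
  rw [Bprox_eq_Bprox_univ hΛsupp hΓsupp, Bprox_univ_eq_klDiv, EReal.coe_ennreal_eq_zero]
  exact ⟨EReal.coe_ennreal_nonneg _, InformationTheory.klDiv_eq_zero_iff⟩

/-- `B(Λ,Γ) ≥ 0`, with equality iff `Λ = Γ`, for finite nonnegative Borel
measures supported on a compact set `Ξ ⊂ ℝ^d`. -/
theorem stmt_5 {d : ℕ} (Ξ : Set (EuclideanSpace ℝ (Fin d))) (hΞcomp : IsCompact Ξ)
    (Λ Γ : Measure (EuclideanSpace ℝ (Fin d)))
    (hΛfin : IsFiniteMeasure Λ) (hΓfin : IsFiniteMeasure Γ)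
    (hΛsupp : Λ Ξᶜ = 0) (hΓsupp : Γ Ξᶜ = 0) :
    0 ≤ Bprox Ξ Λ Γ ∧ (Bprox Ξ Λ Γ = 0 ↔ Λ = Γ) :=
  stmt_5_general Ξ Λ Γ hΛfin hΓfin hΛsupp hΓsupp
end
end

section
/- (Generalized Pinsker inequality.) Let ρ > 0 and let Λ, Γ be finite nonnegative Borel measures on a compact set Ξ ⊂ ℝ^d with Λ(Ξ) ≤ ρ and Γ(Ξ) ≤ ρ. Then B(Λ,Γ) ≥ ‖Λ − Γ‖_TV² / (2ρ), where ‖Λ − Γ‖_TV denotes the total variation norm of the signed measure Λ − Γ. -/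
open MeasureTheory Set
open scoped Classical

/-! For measures concentrated on `Ξ`, `B(Λ, Γ)` is the Kullback–Leibler divergence of finite
measures, `∫ klFun f dΓ` with `f = dΛ/dΓ` and `klFun x = x log x + 1 - x`, while
`‖Λ - Γ‖_TV = ∫ |f - 1| dΓ`. The elementary inequality `3 (x - 1)² ≤ (2x + 4) klFun x` and
Cauchy–Schwarz, in the form of a nonpositive discriminant in `t`, give `(∫ |f - 1| dΓ)² ≤ (2/3) ∫ (f + 2) dΓ · ∫ klFun f dΓ`, and
`∫ (f + 2) dΓ = Λ(Ξ) + 2 Γ(Ξ) ≤ 3ρ`. -/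

open InformationTheory Real

lemma monotoneOn_add_one_mul_log_sub_two_mul :
    MonotoneOn (fun x : ℝ => (x + 1) * log x - 2 * (x - 1)) (Ioi 0) := by
  refine monotoneOn_of_hasDerivWithinAt_nonneg (convex_Ioi 0)
    (f' := fun x => log x + x⁻¹ - 1) (fun x hx => ?_) (fun x hx => ?_) (fun x hx => ?_)
  · exact (((continuousAt_id.add continuousAt_const).mul (continuousAt_log (ne_of_gt hx))).sub
      (by fun_prop)).continuousWithinAt
  · rw [interior_Ioi] at hx
    have hx : 0 < x := hx
    exact (((((hasDerivAt_id x).add_const 1).mul (hasDerivAt_log hx.ne')).sub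
      (((hasDerivAt_id x).sub_const 1).const_mul 2)).hasDerivWithinAt).congr_deriv
      (by field_simp; simp only [id]; ring)
  · rw [interior_Ioi] at hx
    linarith [one_sub_inv_le_log_of_pos hx]

lemma hasDerivAt_mul_klFun_sub_sq {x : ℝ} (hx : x ≠ 0) :
    HasDerivAt (fun x => (2 * x + 4) * klFun x - 3 * (x - 1) ^ 2)
      (4 * ((x + 1) * log x - 2 * (x - 1))) x := by
  refine (((((hasDerivAt_id x).const_mul 2).add_const 4).mul (hasDerivAt_klFun hx)).sub
    ((((hasDerivAt_id x).sub_const 1).pow 2).const_mul 3)).congr_deriv ?_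
  simp only [klFun_apply, id]
  ring

lemma three_mul_sq_sub_one_le_mul_klFun {x : ℝ} (hx : 0 ≤ x) :
    3 * (x - 1) ^ 2 ≤ (2 * x + 4) * klFun x := by
  set h := fun x : ℝ => (2 * x + 4) * klFun x - 3 * (x - 1) ^ 2 with h_def
  have h_cont : Continuous h := by fun_prop [continuous_klFun]
  have h_one : h 1 = 0 := by simp [h, klFun_one]
  have h_deriv {y : ℝ} (hy : 0 < y) (s : Set ℝ) : HasDerivWithinAt h _ s y :=
    (hasDerivAt_mul_klFun_sub_sq hy.ne').hasDerivWithinAt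
  have g_one : (1 + 1) * log 1 - 2 * (1 - 1) = (0 : ℝ) := by simp
  suffices h 1 ≤ h x by rw [h_one] at this; simp only [h_def] at this; linarith
  rcases le_total x 1 with hx1 | hx1
  · refine antitoneOn_of_hasDerivWithinAt_nonpos (convex_Icc 0 1) h_cont.continuousOn
      (fun y hy => h_deriv ?_ _) (fun y hy => ?_) ⟨hx, hx1⟩ ⟨zero_le_one, le_rfl⟩ hx1
    all_goals rw [interior_Icc] at hy
    · exact hy.1
    · have := monotoneOn_add_one_mul_log_sub_two_mul hy.1 (mem_Ioi.2 one_pos) hy.2.le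
      linarith
  · refine monotoneOn_of_hasDerivWithinAt_nonneg (convex_Ici 1) h_cont.continuousOn
      (fun y hy => h_deriv ?_ _) (fun y hy => ?_) (mem_Ici.2 le_rfl) hx1 hx1
    all_goals rw [interior_Ici] at hy
    · exact zero_lt_one.trans hy
    · have := monotoneOn_add_one_mul_log_sub_two_mul (mem_Ioi.2 one_pos)
        (mem_Ioi.2 (zero_lt_one.trans hy)) hy.out.le
      linarith

lemma two_mul_mul_abs_sub_one_le (t : ℝ) {x : ℝ} (hx : 0 ≤ x) :
    2 * t * |x - 1| ≤ t ^ 2 * klFun x + 2 / 3 * (x + 2) := by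
  nlinarith [sq_nonneg (t * |x - 1| - 2 / 3 * (x + 2)), sq_abs (x - 1), abs_nonneg (x - 1),
    mul_le_mul_of_nonneg_left (three_mul_sq_sub_one_le_mul_klFun hx) (sq_nonneg t)]

lemma sq_le_mul_of_forall_two_mul_mul_le {a b c : ℝ} (h : ∀ t, 2 * t * a ≤ t ^ 2 * b + c) :
    a ^ 2 ≤ b * c := by
  have := discrim_le_zero (a := b) (b := -2 * a) (c := c) fun t => by linarith [h t]
  rw [discrim] at this
  linarith

section FiniteMeasure

variable {α : Type*} [MeasurableSpace α] {μ ν : Measure α} [IsFiniteMeasure μ] [IsFiniteMeasure ν]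

lemma integrable_toReal_rnDeriv_sub_one :
    Integrable (fun x => (μ.rnDeriv ν x).toReal - 1) ν :=
  Measure.integrable_toReal_rnDeriv.sub (integrable_const 1)

lemma toSignedMeasure_sub_eq_withDensityᵥ (hμν : μ ≪ ν) :
    μ.toSignedMeasure - ν.toSignedMeasure =
      ν.withDensityᵥ (fun x => (μ.rnDeriv ν x).toReal - 1) := by
  ext s hs
  rw [Measure.toSignedMeasure_sub_apply hs, withDensityᵥ_apply integrable_toReal_rnDeriv_sub_one hs,
    integral_sub Measure.integrable_toReal_rnDeriv.integrableOn (integrable_const 1).integrableOn,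
    Measure.setIntegral_toReal_rnDeriv hμν, setIntegral_const, smul_eq_mul, mul_one]

lemma totalVariation_toSignedMeasure_sub (hμν : μ ≪ ν) :
    (μ.toSignedMeasure - ν.toSignedMeasure).totalVariation =
      ν.withDensity (fun x => ‖(μ.rnDeriv ν x).toReal - 1‖ₑ) := by
  rw [SignedMeasure.totalVariation_eq_variation, toSignedMeasure_sub_eq_withDensityᵥ hμν,
    Measure.variation_withDensityᵥ integrable_toReal_rnDeriv_sub_one]

lemma totalVariation_toSignedMeasure_sub_real_univ (hμν : μ ≪ ν) :
    (μ.toSignedMeasure - ν.toSignedMeasure).totalVariation.real univ =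
      ∫ x, |(μ.rnDeriv ν x).toReal - 1| ∂ν := by
  rw [totalVariation_toSignedMeasure_sub hμν, measureReal_def,
    withDensity_apply _ MeasurableSet.univ, Measure.restrict_univ,
    ← integral_norm_eq_lintegral_enorm integrable_toReal_rnDeriv_sub_one.aestronglyMeasurable]
  rfl

theorem sq_totalVariation_toSignedMeasure_sub_le (hμν : μ ≪ ν) (h_int : Integrable (llr μ ν) μ) :
    (μ.toSignedMeasure - ν.toSignedMeasure).totalVariation.real univ ^ 2 ≤
      (klDiv μ ν).toReal * (2 / 3 * (μ.real univ + 2 * ν.real univ)) := by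
  rw [totalVariation_toSignedMeasure_sub_real_univ hμν, toReal_klDiv_eq_integral_klFun hμν]
  refine sq_le_mul_of_forall_two_mul_mul_le fun t => ?_
  have hf : Integrable (fun x => (μ.rnDeriv ν x).toReal + 2) ν :=
    Measure.integrable_toReal_rnDeriv.add (integrable_const 2)
  have hklFun := (integrable_klFun_rnDeriv_iff hμν).2 h_int
  have hmass : ∫ x, ((μ.rnDeriv ν x).toReal + 2) ∂ν = μ.real univ + 2 * ν.real univ := by
    rw [integral_add Measure.integrable_toReal_rnDeriv (integrable_const 2),
      Measure.integral_toReal_rnDeriv hμν, integral_const, smul_eq_mul, mul_comm]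
  calc 2 * t * ∫ x, |(μ.rnDeriv ν x).toReal - 1| ∂ν
      = ∫ x, 2 * t * |(μ.rnDeriv ν x).toReal - 1| ∂ν := (integral_const_mul _ _).symm
    _ ≤ ∫ x, (t ^ 2 * klFun (μ.rnDeriv ν x).toReal + 2 / 3 * ((μ.rnDeriv ν x).toReal + 2)) ∂ν :=
        integral_mono (integrable_toReal_rnDeriv_sub_one.abs.const_mul _)
          ((hklFun.const_mul _).add (hf.const_mul _))
          fun x => two_mul_mul_abs_sub_one_le t ENNReal.toReal_nonneg
    _ = t ^ 2 * ∫ x, klFun (μ.rnDeriv ν x).toReal ∂ν + 2 / 3 * (μ.real univ + 2 * ν.real univ) := by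
        rw [integral_add (hklFun.const_mul _) (hf.const_mul _), integral_const_mul,
          integral_const_mul, hmass]

end FiniteMeasure

lemma Bprox_eq_klDiv {E : Type*} [MeasurableSpace E] {Ξ : Set E} {Λ Γ : Measure E}
    [IsFiniteMeasure Λ] [IsFiniteMeasure Γ] (hΛ : Λ Ξᶜ = 0) (hΓ : Γ Ξᶜ = 0) :
    Bprox Ξ Λ Γ = klDiv Λ Γ := by
  rw [Bprox, IntegrableOn, Measure.restrict_eq_self_of_ae_mem (mem_ae_iff.2 hΛ)]
  split_ifs with h
  · rw [← EReal.coe_ennreal_toReal (klDiv_ne_top h.1 h.2), toReal_klDiv h.1 h.2,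
      measure_of_measure_compl_eq_zero hΛ, measure_of_measure_compl_eq_zero hΓ]
    congr 1
    simp only [measureReal_def, llr]
    ring
  · rw [klDiv_eq_top_iff.2 fun hac hint => h ⟨hac, hint⟩]
    rfl

theorem stmt_7_general {d : ℕ} (Ξ : Set (EuclideanSpace ℝ (Fin d)))
    (ρ : ℝ) (hρ : 0 < ρ)
    (Λ Γ : Measure (EuclideanSpace ℝ (Fin d)))
    (hΛfin : IsFiniteMeasure Λ) (hΓfin : IsFiniteMeasure Γ)
    (hΛsupp : Λ Ξᶜ = 0) (hΓsupp : Γ Ξᶜ = 0)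
    (hΛρ : (Λ Ξ).toReal ≤ ρ) (hΓρ : (Γ Ξ).toReal ≤ ρ) :
    ((((Λ.toSignedMeasure - Γ.toSignedMeasure).totalVariation Ξ).toReal ^ 2 / (2 * ρ)
        : ℝ) : EReal)
      ≤ Bprox Ξ Λ Γ := by
  rw [Bprox_eq_klDiv hΛsupp hΓsupp]
  by_cases hKL : klDiv Λ Γ = ⊤
  · simp [hKL]
  obtain ⟨hac, hint⟩ := klDiv_ne_top_iff.1 hKL
  rw [← EReal.coe_ennreal_toReal hKL, EReal.coe_le_coe_iff, div_le_iff₀ (by positivity)]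
  have hmass : Λ.real univ + 2 * Γ.real univ ≤ 3 * ρ := by
    simp only [measureReal_def, ← measure_of_measure_compl_eq_zero hΛsupp,
      ← measure_of_measure_compl_eq_zero hΓsupp]
    linarith
  calc ((Λ.toSignedMeasure - Γ.toSignedMeasure).totalVariation Ξ).toReal ^ 2
      ≤ (Λ.toSignedMeasure - Γ.toSignedMeasure).totalVariation.real univ ^ 2 :=
        pow_le_pow_left₀ ENNReal.toReal_nonneg (measureReal_mono (subset_univ Ξ)) 2
    _ ≤ (klDiv Λ Γ).toReal * (2 / 3 * (Λ.real univ + 2 * Γ.real univ)) :=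
        sq_totalVariation_toSignedMeasure_sub_le hac hint
    _ ≤ (klDiv Λ Γ).toReal * (2 * ρ) :=
        mul_le_mul_of_nonneg_left (by linarith) ENNReal.toReal_nonneg

/-- Generalized Pinsker inequality:  if `Λ(Ξ) ≤ ρ` and `Γ(Ξ) ≤ ρ` then
`B(Λ,Γ) ≥ ‖Λ − Γ‖_TV² / (2ρ)`, where `‖Λ − Γ‖_TV = |Λ − Γ|(Ξ)` is the total
variation norm of the signed measure `Λ − Γ`. -/
theorem stmt_7 {d : ℕ} (Ξ : Set (EuclideanSpace ℝ (Fin d))) (hΞcomp : IsCompact Ξ)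
    (ρ : ℝ) (hρ : 0 < ρ)
    (Λ Γ : Measure (EuclideanSpace ℝ (Fin d)))
    (hΛfin : IsFiniteMeasure Λ) (hΓfin : IsFiniteMeasure Γ)
    (hΛsupp : Λ Ξᶜ = 0) (hΓsupp : Γ Ξᶜ = 0)
    (hΛρ : (Λ Ξ).toReal ≤ ρ) (hΓρ : (Γ Ξ).toReal ≤ ρ) :
    ((((Λ.toSignedMeasure - Γ.toSignedMeasure).totalVariation Ξ).toReal ^ 2 / (2 * ρ)
        : ℝ) : EReal)
      ≤ Bprox Ξ Λ Γ :=
  stmt_7_general Ξ ρ hρ Λ Γ hΛfin hΓfin hΛsupp hΓsupp hΛρ hΓρ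
end

section
/- Define h(x) := x log x − x + 1 for x ≥ 0, with the convention 0 log 0 = 0. Then (4/3 + (2/3)x)·h(x) ≥ (x − 1)² for all x ≥ 0. -/
/-!
Up to the factor `2/3`, the difference of the two sides is `F x = (x + 2) h x - (3/2) (x - 1)²`.
Since `h' = log`, one finds `F' = 2 G` with `G x = (x + 1) log x - 2 (x - 1)`, and
`G' = log x + 1/x - 1 ≥ 0`. As `G 1 = 0`, `G` has the sign of `x - 1`, so `F` attains its minimum
over `[0, ∞)` at `1`, where it vanishes; continuity at `0` comes from that of `x log x`.
-/

noncomputable section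

/-- `h(x) = x log x − x + 1` (with `0 log 0 = 0`, automatic since `Real.log 0 = 0`). -/
def hfun (x : ℝ) : ℝ := x * Real.log x - x + 1

open Real Set

@[fun_prop]
lemma continuous_hfun : Continuous hfun :=
  (continuous_mul_log.sub continuous_id).add continuous_const

lemma hasDerivAt_hfun {x : ℝ} (hx : 0 < x) : HasDerivAt hfun (log x) x := by
  have := (((hasDerivAt_id x).mul (hasDerivAt_log hx.ne')).sub (hasDerivAt_id x)).add_const 1
  refine (this : HasDerivAt hfun _ x).congr_deriv ?_
  simp [hx.ne']

/-- `log x` against `2 (x - 1) / (x + 1)`, i.e. the logarithmic mean of `1` and `x` against their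
arithmetic mean, with denominators cleared. -/
def logMeanGap (x : ℝ) : ℝ := (x + 1) * log x - 2 * (x - 1)

lemma hasDerivAt_logMeanGap {x : ℝ} (hx : 0 < x) :
    HasDerivAt logMeanGap (log x + x⁻¹ - 1) x := by
  have := (((hasDerivAt_id x).add_const 1).mul (hasDerivAt_log hx.ne')).sub
    (((hasDerivAt_id x).sub_const 1).const_mul 2)
  refine (this : HasDerivAt logMeanGap _ x).congr_deriv ?_
  simp only [id]
  field_simp
  ring

lemma monotoneOn_logMeanGap : MonotoneOn logMeanGap (Ioi 0) := by
  refine monotoneOn_of_deriv_nonneg (convex_Ioi 0)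
    (fun x hx => (hasDerivAt_logMeanGap hx).continuousAt.continuousWithinAt)
    (fun x hx =>
      (hasDerivAt_logMeanGap (interior_subset hx)).differentiableAt.differentiableWithinAt)
    fun x hx => ?_
  rw [interior_Ioi] at hx
  rw [(hasDerivAt_logMeanGap hx).deriv]
  linarith [one_sub_inv_le_log_of_pos hx]

lemma logMeanGap_one : logMeanGap 1 = 0 := by simp [logMeanGap]

lemma logMeanGap_nonpos {x : ℝ} (hx₀ : 0 < x) (hx : x ≤ 1) : logMeanGap x ≤ 0 :=
  logMeanGap_one ▸ monotoneOn_logMeanGap hx₀ (mem_Ioi.mpr one_pos) hx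

lemma logMeanGap_nonneg {x : ℝ} (hx : 1 ≤ x) : 0 ≤ logMeanGap x :=
  logMeanGap_one ▸
    monotoneOn_logMeanGap (mem_Ioi.mpr one_pos) (mem_Ioi.mpr (one_pos.trans_le hx)) hx

def hfunGap (x : ℝ) : ℝ := (x + 2) * hfun x - 3 / 2 * (x - 1) ^ 2

lemma hfunGap_one : hfunGap 1 = 0 := by simp [hfunGap, hfun]

lemma hasDerivAt_hfunGap {x : ℝ} (hx : 0 < x) :
    HasDerivAt hfunGap (2 * logMeanGap x) x := by
  have := (((hasDerivAt_id x).add_const 2).mul (hasDerivAt_hfun hx)).sub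
    ((((hasDerivAt_id x).sub_const 1).pow 2).const_mul (3 / 2))
  refine (this : HasDerivAt hfunGap _ x).congr_deriv ?_
  simp only [logMeanGap, hfun, id]
  ring

lemma isMinOn_hfunGap : IsMinOn hfunGap (Ici 0) 1 := by
  have hcont : Continuous hfunGap := by unfold hfunGap; fun_prop
  refine isMinOn_Ici_of_deriv hcont.continuousAt hcont.continuousAt
    (fun y hy => (hasDerivAt_hfunGap hy.1).differentiableAt.differentiableWithinAt)
    (fun y hy => (hasDerivAt_hfunGap (one_pos.trans hy)).differentiableAt.differentiableWithinAt)
    (fun y hy => ?_) fun y hy => ?_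
  · rw [(hasDerivAt_hfunGap hy.1).deriv]
    linarith [logMeanGap_nonpos hy.1 hy.2.le]
  · rw [(hasDerivAt_hfunGap (one_pos.trans hy)).deriv]
    linarith [logMeanGap_nonneg hy.le]

/-- `(4/3 + (2/3) x) · h(x) ≥ (x − 1)²` for all `x ≥ 0`. -/
theorem stmt_8 : ∀ x : ℝ, 0 ≤ x → (x - 1) ^ 2 ≤ (4 / 3 + 2 / 3 * x) * hfun x := by
  intro x hx
  have hgap : 0 ≤ hfunGap x := hfunGap_one ▸ isMinOn_iff.mp isMinOn_hfunGap x hx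
  unfold hfunGap at hgap
  linear_combination (2 / 3) * hgap
end
end

section
/- Let Ξ ⊂ ℝ^d be compact with vol(Ξ) > 0, let G : Ξ → ℝ be continuous, let κ > 0, let ρ̄ > 0 and ρ₀ ∈ (0, ρ̄], let Λ_u be the measure on Ξ with constant Lebesgue density ρ₀/vol(Ξ), let φ_u be the uniform probability measure on Ξ, and let V := {Λ ∈ M₊(Ξ) : Λ(Ξ) ≤ ρ̄}. Then sup_{Λ∈V} { ∫_Ξ G dΛ − κ·B(Λ, Λ_u) } = sup_{ρ∈[0,ρ̄]} { ρ · sup_{φ∈P(Ξ)} [ ∫_Ξ G dφ − κ·D(φ, φ_u) ] − κ·H(ρ, ρ₀) }, where P(Ξ) is the set of Borel probability measures on Ξ and H(0, ρ₀) := ρ₀. -/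
open MeasureTheory Set
open scoped Classical

noncomputable section

/-!
A measure `Λ ≠ 0` of mass `ρ` concentrated on `Ξ` is `ρ • φ` with `φ` a probability measure on `Ξ`,
and `Λ_u = ρ₀ • φ_u`. Since `log d(ρ φ)/d(ρ₀ φ_u) = log (ρ/ρ₀) + log dφ/dφ_u`, the prox function
splits as `B(ρ φ, ρ₀ φ_u) = ρ D(φ, φ_u) + H(ρ, ρ₀)`, so the objective at `ρ φ` is
`ρ (∫ G dφ - κ D(φ, φ_u)) - κ H(ρ, ρ₀)`; the zero measure gives `-κ ρ₀ = -κ H(0, ρ₀)`. Taking the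
supremum over `φ` first (multiplication by `ρ > 0` commutes with suprema in `EReal`) and then
over `ρ` gives the identity.
-/

open scoped ENNReal

namespace EReal

lemma coe_mul_iSup_of_pos {ι : Sort*} (f : ι → EReal) {c : ℝ} (hc : 0 < c) :
    (c : EReal) * ⨆ i, f i = ⨆ i, (c : EReal) * f i := by
  have hc' : (0 : EReal) < c := by exact_mod_cast hc
  refine le_antisymm ?_ (iSup_le fun i => mul_le_mul_of_nonneg_left (le_iSup f i) hc'.le)
  rw [mul_comm, ← EReal.le_div_iff_mul_le hc' (coe_ne_top c)]
  refine iSup_le fun i => ?_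
  rw [EReal.le_div_iff_mul_le hc' (coe_ne_top c), mul_comm]
  exact le_iSup (fun i => (c : EReal) * f i) i

lemma iSup_sub_coe {ι : Sort*} (f : ι → EReal) (c : ℝ) :
    (⨆ i, f i) - c = ⨆ i, (f i - c) := by
  refine le_antisymm ?_ (iSup_le fun i => EReal.sub_le_sub (le_iSup f i) le_rfl)
  rw [EReal.sub_le_iff_le_add (.inl (coe_ne_bot c)) (.inl (coe_ne_top c))]
  refine iSup_le fun i => ?_
  calc f i = f i - c + c := EReal.sub_add_cancel.symm
    _ ≤ (⨆ i, f i - c) + c := add_le_add_left (le_iSup (fun i => f i - c) i) _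

end EReal

namespace MeasureTheory.Measure

variable {E : Type*} [MeasurableSpace E] {μ ν : Measure E}

lemma absolutelyContinuous_smul_smul_iff {a b : ℝ≥0∞} (ha : a ≠ 0) (hb : b ≠ 0) :
    a • μ ≪ b • ν ↔ μ ≪ ν :=
  ⟨fun h => (absolutelyContinuous_smul ha).trans (h.trans smul_absolutelyContinuous),
    fun h => smul_absolutelyContinuous.trans (h.trans (absolutelyContinuous_smul hb))⟩

lemma rnDeriv_smul_smul [IsFiniteMeasure μ] [μ.HaveLebesgueDecomposition ν]
    {a b : ℝ≥0∞} (ha : a ≠ ∞) (hb : b ≠ 0) (hb' : b ≠ ∞) :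
    (a • μ).rnDeriv (b • ν) =ᵐ[ν] (a * b⁻¹) • μ.rnDeriv ν := by
  have : μ.HaveLebesgueDecomposition (b • ν) := by
    rw [← ENNReal.coe_toNNReal hb', ← ENNReal.smul_def]; infer_instance
  filter_upwards [(absolutelyContinuous_smul hb).ae_le (rnDeriv_smul_left_of_ne_top μ (b • ν) ha),
    rnDeriv_smul_right_of_ne_top μ ν hb hb'] with x hleft hright
  simp only [hleft, hright, Pi.smul_apply, smul_eq_mul, mul_assoc]

lemma measure_eq_measure_univ_of_compl_eq_zero {s : Set E} (h : μ sᶜ = 0) : μ s = μ univ :=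
  measure_congr (ae_eq_univ.2 h)

lemma ofReal_toReal_measure_univ_smul_inv_smul (μ : Measure E) [IsFiniteMeasure μ] :
    ENNReal.ofReal (μ univ).toReal • (μ univ)⁻¹ • μ = μ := by
  rcases eq_or_ne (μ univ) 0 with h | h
  · simp [measure_univ_eq_zero.1 h]
  · rw [ENNReal.ofReal_toReal (measure_ne_top μ univ), smul_smul,
      ENNReal.mul_inv_cancel h (measure_ne_top μ univ), one_smul]

lemma log_toReal_rnDeriv_smul_smul [IsFiniteMeasure μ] [SigmaFinite ν] (hμν : μ ≪ ν)
    {ρ ρ₀ : ℝ} (hρ : 0 < ρ) (hρ₀ : 0 < ρ₀) :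
    ∀ᵐ x ∂μ, Real.log ((ENNReal.ofReal ρ • μ).rnDeriv (ENNReal.ofReal ρ₀ • ν) x).toReal
      = Real.log (ρ / ρ₀) + Real.log (μ.rnDeriv ν x).toReal := by
  filter_upwards [hμν.ae_le (rnDeriv_smul_smul (μ := μ) (ν := ν) ENNReal.ofReal_ne_top
      (ENNReal.ofReal_pos.2 hρ₀).ne' ENNReal.ofReal_ne_top),
    rnDeriv_pos hμν, hμν.ae_le (rnDeriv_lt_top μ ν)] with x hx hpos hlt
  rw [hx, Pi.smul_apply, smul_eq_mul, ENNReal.toReal_mul, ENNReal.toReal_mul,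
    ENNReal.toReal_inv, ENNReal.toReal_ofReal hρ.le, ENNReal.toReal_ofReal hρ₀.le,
    ← div_eq_mul_inv, Real.log_mul (div_pos hρ hρ₀).ne' (ENNReal.toReal_pos hpos.ne' hlt.ne).ne']

end MeasureTheory.Measure

variable {E : Type*} [MeasurableSpace E] {Ξ : Set E}

lemma KLdiv_ne_bot (φ ψ : Measure E) : KLdiv Ξ φ ψ ≠ ⊥ := by
  unfold KLdiv; split_ifs <;> simp

lemma Bprox_zero_left (Γ : Measure E) : Bprox Ξ 0 Γ = (Γ Ξ).toReal := by
  rw [Bprox, if_pos ⟨.zero _, by simp [IntegrableOn]⟩]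
  simp

lemma Bprox_smul_smul {φ ψ : Measure E} [IsFiniteMeasure φ] [SigmaFinite ψ]
    (hφ : φ Ξ = 1) (hψ : ψ Ξ = 1) {ρ ρ₀ : ℝ} (hρ : 0 < ρ) (hρ₀ : 0 < ρ₀) :
    Bprox Ξ (ENNReal.ofReal ρ • φ) (ENNReal.ofReal ρ₀ • ψ) = ρ * KLdiv Ξ φ ψ + Hfun ρ ρ₀ := by
  have ha : ENNReal.ofReal ρ ≠ 0 := (ENNReal.ofReal_pos.2 hρ).ne'
  have hac : ENNReal.ofReal ρ • φ ≪ ENNReal.ofReal ρ₀ • ψ ↔ φ ≪ ψ :=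
    Measure.absolutelyContinuous_smul_smul_iff ha (ENNReal.ofReal_pos.2 hρ₀).ne'
  have hconst : IntegrableOn (fun _ => Real.log (ρ / ρ₀)) Ξ φ :=
    integrableOn_const (measure_ne_top φ Ξ)
  have hint (hφψ : φ ≪ ψ) :
      IntegrableOn (fun ξ => Real.log ((ENNReal.ofReal ρ • φ).rnDeriv
        (ENNReal.ofReal ρ₀ • ψ) ξ).toReal) Ξ (ENNReal.ofReal ρ • φ)
      ↔ IntegrableOn (fun ξ => Real.log (φ.rnDeriv ψ ξ).toReal) Ξ φ := by
    rw [IntegrableOn, Measure.restrict_smul, integrable_smul_measure ha ENNReal.ofReal_ne_top,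
      ← IntegrableOn, integrableOn_congr_fun_ae
        (ae_restrict_of_ae (Measure.log_toReal_rnDeriv_smul_smul hφψ hρ hρ₀))]
    exact integrable_add_iff_integrable_right hconst
  by_cases h : φ ≪ ψ ∧ IntegrableOn (fun ξ => Real.log (φ.rnDeriv ψ ξ).toReal) Ξ φ
  · rw [Bprox, if_pos ⟨hac.2 h.1, (hint h.1).2 h.2⟩, KLdiv, if_pos h, Measure.restrict_smul,
      integral_smul_measure, integral_congr_ae
        (ae_restrict_of_ae (Measure.log_toReal_rnDeriv_smul_smul h.1 hρ hρ₀)),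
      integral_add hconst h.2, setIntegral_const]
    simp only [Measure.smul_apply, smul_eq_mul, measureReal_def, hφ, hψ, mul_one, one_mul,
      ENNReal.toReal_one, ENNReal.toReal_ofReal hρ.le, ENNReal.toReal_ofReal hρ₀.le]
    norm_cast
    rw [Hfun]
    ring
  · rw [Bprox, if_neg fun h' => h ⟨hac.1 h'.1, (hint (hac.1 h'.1)).1 h'.2⟩, KLdiv, if_neg h,
      EReal.coe_mul_top_of_pos hρ, EReal.top_add_coe]

lemma integral_sub_Bprox_smul_smul (G : E → ℝ) {κ : ℝ} (hκ : 0 < κ) {φ ψ : Measure E}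
    [IsFiniteMeasure φ] [SigmaFinite ψ] (hφ : φ Ξ = 1) (hψ : ψ Ξ = 1) {ρ ρ₀ : ℝ}
    (hρ : 0 < ρ) (hρ₀ : 0 < ρ₀) :
    ((∫ ξ in Ξ, G ξ ∂(ENNReal.ofReal ρ • φ) : ℝ) : EReal)
        - κ * Bprox Ξ (ENNReal.ofReal ρ • φ) (ENNReal.ofReal ρ₀ • ψ)
      = ρ * (((∫ ξ in Ξ, G ξ ∂φ : ℝ) : EReal) - κ * KLdiv Ξ φ ψ)
        - ((κ * Hfun ρ ρ₀ : ℝ) : EReal) := by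
  rw [Bprox_smul_smul hφ hψ hρ hρ₀, Measure.restrict_smul, integral_smul_measure,
    ENNReal.toReal_ofReal hρ.le, smul_eq_mul]
  have hD := KLdiv_ne_bot (Ξ := Ξ) φ ψ
  generalize KLdiv Ξ φ ψ = D at hD ⊢
  induction D using EReal.rec with
  | bot => exact absurd rfl hD
  | coe D => norm_cast; ring
  | top =>
    simp [EReal.coe_mul_top_of_pos hκ, EReal.coe_mul_top_of_pos hρ, EReal.coe_mul_bot_of_pos hρ]

lemma Hfun_zero_left (ρ' : ℝ) : Hfun 0 ρ' = ρ' := by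
  simp [Hfun]

lemma integral_sub_Bprox_zero_smul (G : E → ℝ) (κ : ℝ) {ψ : Measure E} (hψ : ψ Ξ = 1)
    {ρ₀ : ℝ} (hρ₀ : 0 ≤ ρ₀) :
    ((∫ ξ in Ξ, G ξ ∂(0 : Measure E) : ℝ) : EReal) - κ * Bprox Ξ 0 (ENNReal.ofReal ρ₀ • ψ)
      = -((κ * Hfun 0 ρ₀ : ℝ) : EReal) := by
  rw [Bprox_zero_left, Measure.restrict_zero, integral_zero_measure, Measure.smul_apply, hψ,
    smul_eq_mul, mul_one, ENNReal.toReal_ofReal hρ₀, Hfun_zero_left]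
  norm_cast
  ring

theorem iSup_integral_sub_Bprox_eq (G : E → ℝ) {κ ρbar ρ₀ : ℝ} (hκ : 0 < κ) (hρbar : 0 ≤ ρbar)
    (hρ₀ : 0 < ρ₀) (ψ : Measure E) [IsProbabilityMeasure ψ] (hψ : ψ Ξᶜ = 0) :
    (⨆ (Λ : Measure E) (_ : IsFiniteMeasure Λ) (_ : Λ Ξᶜ = 0)
        (_ : Λ Ξ ≤ ENNReal.ofReal ρbar),
        ((∫ ξ in Ξ, G ξ ∂Λ : ℝ) : EReal) - (κ : EReal) * Bprox Ξ Λ (ENNReal.ofReal ρ₀ • ψ))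
      = ⨆ ρ ∈ Set.Icc (0 : ℝ) ρbar,
          (ρ : EReal) *
              (⨆ (φ : Measure E) (_ : IsProbabilityMeasure φ) (_ : φ Ξᶜ = 0),
                ((∫ ξ in Ξ, G ξ ∂φ : ℝ) : EReal) - (κ : EReal) * KLdiv Ξ φ ψ)
            - ((κ * Hfun ρ ρ₀ : ℝ) : EReal) := by
  have hψΞ : ψ Ξ = 1 := (Measure.measure_eq_measure_univ_of_compl_eq_zero hψ).trans measure_univ
  refine le_antisymm (iSup₂_le fun Λ _ => iSup₂_le fun hΛ hmass => ?_)
    (iSup₂_le fun ρ hρ => ?_)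
  · rcases eq_zero_or_neZero Λ with rfl | hΛ0
    · rw [integral_sub_Bprox_zero_smul G κ hψΞ hρ₀.le]
      refine le_iSup₂_of_le 0 ⟨le_rfl, hρbar⟩ ?_
      rw [EReal.coe_zero, zero_mul, zero_sub]
    have hΛΞ : Λ Ξ = Λ univ := Measure.measure_eq_measure_univ_of_compl_eq_zero hΛ
    set ρ := (Λ univ).toReal
    have hρ : 0 < ρ :=
      ENNReal.toReal_pos (Measure.measure_univ_ne_zero.2 hΛ0.out) (measure_ne_top Λ univ)
    have hρle : ρ ≤ ρbar := ENNReal.toReal_le_of_le_ofReal hρbar (hΛΞ ▸ hmass)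
    set φ := (Λ univ)⁻¹ • Λ
    have hφ : φ Ξᶜ = 0 := by simp [φ, hΛ]
    have hφΞ : φ Ξ = 1 := (Measure.measure_eq_measure_univ_of_compl_eq_zero hφ).trans measure_univ
    rw [← Measure.ofReal_toReal_measure_univ_smul_inv_smul Λ,
      integral_sub_Bprox_smul_smul G hκ hφΞ hψΞ hρ hρ₀]
    refine le_iSup₂_of_le ρ ⟨hρ.le, hρle⟩ (EReal.sub_le_sub ?_ le_rfl)
    exact mul_le_mul_of_nonneg_left (le_iSup₂_of_le φ inferInstance (le_iSup_of_le hφ le_rfl))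
      (EReal.coe_nonneg.2 hρ.le)
  · rcases hρ.1.eq_or_lt with rfl | hρpos
    · refine le_iSup₂_of_le 0 inferInstance (le_iSup₂_of_le (by simp) (by simp) ?_)
      rw [integral_sub_Bprox_zero_smul G κ hψΞ hρ₀.le, EReal.coe_zero, zero_mul, zero_sub]
    simp only [EReal.coe_mul_iSup_of_pos _ hρpos, EReal.iSup_sub_coe]
    refine iSup₂_le fun φ _ => iSup_le fun hφ => ?_
    have hφΞ : φ Ξ = 1 := (Measure.measure_eq_measure_univ_of_compl_eq_zero hφ).trans measure_univ
    rw [← integral_sub_Bprox_smul_smul G hκ hφΞ hψΞ hρpos hρ₀]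
    refine le_iSup₂_of_le (ENNReal.ofReal ρ • φ) (φ.smul_finite ENNReal.ofReal_ne_top)
      (le_iSup₂_of_le (by simp [hφ]) ?_ le_rfl)
    rw [Measure.smul_apply, hφΞ, smul_eq_mul, mul_one]
    exact ENNReal.ofReal_le_ofReal hρ.2

theorem stmt_11_general {d : ℕ} (Ξ : Set (EuclideanSpace ℝ (Fin d))) (hΞcomp : IsCompact Ξ)
    (hvol : 0 < volume Ξ)
    (G : EuclideanSpace ℝ (Fin d) → ℝ)
    (κ : ℝ) (hκ : 0 < κ)
    (ρbar ρ0 : ℝ) (hρbar : 0 < ρbar) (hρ0 : ρ0 ∈ Set.Ioc (0 : ℝ) ρbar) :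
    -- `Λ_u` : the measure with constant Lebesgue density `ρ₀ / vol(Ξ)` on `Ξ`
    let Λu : Measure (EuclideanSpace ℝ (Fin d)) :=
      ENNReal.ofReal (ρ0 / (volume Ξ).toReal) • volume.restrict Ξ
    -- `φ_u` : the uniform probability measure on `Ξ`
    let φu : Measure (EuclideanSpace ℝ (Fin d)) := (volume Ξ)⁻¹ • volume.restrict Ξ
    (⨆ (Λ : Measure (EuclideanSpace ℝ (Fin d))) (_ : IsFiniteMeasure Λ) (_ : Λ Ξᶜ = 0)
        (_ : Λ Ξ ≤ ENNReal.ofReal ρbar),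
        ((∫ ξ in Ξ, G ξ ∂Λ : ℝ) : EReal) - (κ : EReal) * Bprox Ξ Λ Λu)
      = ⨆ ρ ∈ Set.Icc (0 : ℝ) ρbar,
          (ρ : EReal) *
              (⨆ (φ : Measure (EuclideanSpace ℝ (Fin d))) (_ : IsProbabilityMeasure φ)
                  (_ : φ Ξᶜ = 0),
                ((∫ ξ in Ξ, G ξ ∂φ : ℝ) : EReal) - (κ : EReal) * KLdiv Ξ φ φu)
            - ((κ * Hfun ρ ρ0 : ℝ) : EReal) := by
  intro Λu φu
  have hΞ : MeasurableSet Ξ := hΞcomp.isClosed.measurableSet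
  have hvolΞ : volume Ξ ≠ ⊤ := hΞcomp.measure_lt_top.ne
  have : IsProbabilityMeasure φu :=
    ProbabilityTheory.cond_isProbabilityMeasure_of_finite hvol.ne' hvolΞ
  have hΛu : Λu = ENNReal.ofReal ρ0 • φu := by
    simp only [Λu, φu]
    rw [smul_smul, ENNReal.ofReal_div_of_pos (ENNReal.toReal_pos hvol.ne' hvolΞ),
      ENNReal.ofReal_toReal hvolΞ, div_eq_mul_inv]
  rw [hΛu]
  exact iSup_integral_sub_Bprox_eq G hκ hρbar.le hρ0.1 φu
    (ProbabilityTheory.ae_cond_mem₀ hΞ.nullMeasurableSet)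

/-- Two-stage decomposition of the inner maximization:
`sup_{Λ ∈ V} { ∫_Ξ G dΛ − κ B(Λ,Λ_u) }
  = sup_{ρ ∈ [0,ρ̄]} { ρ · sup_{φ ∈ P(Ξ)} [ ∫_Ξ G dφ − κ D(φ,φ_u) ] − κ H(ρ,ρ₀) }`,
where `V = {Λ ∈ M₊(Ξ) : Λ(Ξ) ≤ ρ̄}` and `Λ_u` has constant density `ρ₀/vol(Ξ)`. -/
theorem stmt_11 {d : ℕ} (Ξ : Set (EuclideanSpace ℝ (Fin d))) (hΞcomp : IsCompact Ξ)
    (hvol : 0 < volume Ξ)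
    (G : EuclideanSpace ℝ (Fin d) → ℝ) (hG : ContinuousOn G Ξ)
    (κ : ℝ) (hκ : 0 < κ)
    (ρbar ρ0 : ℝ) (hρbar : 0 < ρbar) (hρ0 : ρ0 ∈ Set.Ioc (0 : ℝ) ρbar) :
    -- `Λ_u` : the measure with constant Lebesgue density `ρ₀ / vol(Ξ)` on `Ξ`
    let Λu : Measure (EuclideanSpace ℝ (Fin d)) :=
      ENNReal.ofReal (ρ0 / (volume Ξ).toReal) • volume.restrict Ξ
    -- `φ_u` : the uniform probability measure on `Ξ`
    let φu : Measure (EuclideanSpace ℝ (Fin d)) := (volume Ξ)⁻¹ • volume.restrict Ξ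
    (⨆ (Λ : Measure (EuclideanSpace ℝ (Fin d))) (_ : IsFiniteMeasure Λ) (_ : Λ Ξᶜ = 0)
        (_ : Λ Ξ ≤ ENNReal.ofReal ρbar),
        ((∫ ξ in Ξ, G ξ ∂Λ : ℝ) : EReal) - (κ : EReal) * Bprox Ξ Λ Λu)
      = ⨆ ρ ∈ Set.Icc (0 : ℝ) ρbar,
          (ρ : EReal) *
              (⨆ (φ : Measure (EuclideanSpace ℝ (Fin d))) (_ : IsProbabilityMeasure φ)
                  (_ : φ Ξᶜ = 0),
                ((∫ ξ in Ξ, G ξ ∂φ : ℝ) : EReal) - (κ : EReal) * KLdiv Ξ φ φu)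
            - ((κ * Hfun ρ ρ0 : ℝ) : EReal) :=
  stmt_11_general Ξ hΞcomp hvol G κ hκ ρbar ρ0 hρbar hρ0
end
end

section
/- Let X ⊂ ℝ^m be convex compact, f : X → ℝ convex continuous, Ξ ⊂ ℝ^d compact with vol(Ξ) > 0, and g : X × Ξ → ℝ continuous with x ↦ g(x,ξ) convex for each ξ. Let κ ∈ (0,1], ρ̄ > 0, ρ₀ ∈ (0, ρ̄], Λ_u the measure with constant Lebesgue density ρ₀/vol(Ξ), V := {Λ ∈ M₊(Ξ) : Λ(Ξ) ≤ ρ̄}, and define the regularized Lagrangian L_κ(x,Λ) := f(x) + ∫_Ξ g(x,ξ) dΛ(ξ) − κ·B(Λ, Λ_u). Then there exists a saddle point (x*_κ, Λ*_κ) ∈ X × V of L_κ, i.e. L_κ(x*_κ, Λ) ≤ L_κ(x*_κ, Λ*_κ) ≤ L_κ(x, Λ*_κ) for all (x, Λ) ∈ X × V, and min_{x∈X} sup_{Λ∈V} L_κ(x,Λ) = sup_{Λ∈V} min_{x∈X} L_κ(x,Λ) = L_κ(x*_κ, Λ*_κ). -/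
open MeasureTheory Set
open scoped Classical

noncomputable section

/-!
For fixed `x`, put `Z(x) = ∫ exp (g x / κ) dΛu`. Gibbs' inequality `KL(Λ ‖ Γₓ) ≥ 0`, for `Γₓ`
the measure `∝ exp (g x / κ) Λu` of mass `min (Z(x), ρ̄)`, shows that `Γₓ` maximizes `L(x, ·)`
on `V`, with maximum `f x + κ (φ (Z x) - ρ₀)` where `φ Z = min_{0 < c ≤ 1} (c Z - ρ̄ log c)`.
Let `xs` minimize this continuous function on the compact set `X` and put `Λs = Γ_{xs}`.
To see that `xs` minimizes the convex function `L(·, Λs)`, move from `xs` towards `x ∈ X`: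
bounding `φ` by its tangent line at `Z(xs)`, and `Z` along the segment by convexity of `g`, the
minimality of `xs` says that an explicit differentiable function of the step length is minimal
at `0`; its derivative there is `f x - f xs + ∫ (g x - g xs) dΛs`.
-/

open Real ProbabilityTheory InformationTheory Filter
open scoped ENNReal

section CappedLogPartition

variable {ρ : ℝ}

def massScale (ρ Z : ℝ) : ℝ := ρ / max Z ρ

/-- `cappedLogPartition ρ Z = min_{0 < c ≤ 1} (c Z - ρ log c)`, attained at `c = massScale ρ Z`
(see `cappedLogPartition_le`): it equals `Z` for `Z ≤ ρ` and `ρ + ρ log (Z / ρ)` beyond. -/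
def cappedLogPartition (ρ Z : ℝ) : ℝ := massScale ρ Z * Z - ρ * log (massScale ρ Z)

lemma massScale_pos (hρ : 0 < ρ) (Z : ℝ) : 0 < massScale ρ Z :=
  div_pos hρ (hρ.trans_le (le_max_right _ _))

lemma massScale_le_one (hρ : 0 < ρ) (Z : ℝ) : massScale ρ Z ≤ 1 :=
  div_le_one_of_le₀ (le_max_right _ _) (hρ.le.trans (le_max_right _ _))

lemma massScale_mul_le (hρ : 0 < ρ) (Z : ℝ) : massScale ρ Z * Z ≤ ρ := by
  rw [massScale, div_mul_eq_mul_div, div_le_iff₀ (hρ.trans_le (le_max_right _ _))]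
  exact mul_le_mul_of_nonneg_left (le_max_left _ _) hρ.le

lemma massScale_mul_mul_log (hρ : 0 < ρ) (Z : ℝ) :
    massScale ρ Z * Z * log (massScale ρ Z) = ρ * log (massScale ρ Z) := by
  rcases le_total Z ρ with hZ | hZ
  · simp [massScale, max_eq_right hZ, hρ.ne']
  · rw [massScale, max_eq_left hZ, div_mul_cancel₀ _ (hρ.trans_le hZ).ne']

lemma cappedLogPartition_le (hρ : 0 < ρ) {c : ℝ} (hc0 : 0 < c) (hc1 : c ≤ 1) (Z : ℝ) :
    cappedLogPartition ρ Z ≤ c * Z - ρ * log c := by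
  have hlogc := log_le_sub_one_of_pos hc0
  rcases le_total Z ρ with hZ | hZ
  · simp only [cappedLogPartition, massScale, max_eq_right hZ, div_self hρ.ne', log_one]
    nlinarith
  · have hZ0 : 0 < Z := hρ.trans_le hZ
    have hlog := log_le_sub_one_of_pos (by positivity : 0 < c * Z / ρ)
    rw [log_div (by positivity) hρ.ne', log_mul hc0.ne' hZ0.ne'] at hlog
    simp only [cappedLogPartition, massScale, max_eq_left hZ, div_mul_cancel₀ _ hZ0.ne',
      log_div hρ.ne' hZ0.ne']
    have := mul_le_mul_of_nonneg_left hlog hρ.le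
    rw [mul_sub, div_sub_one hρ.ne', mul_div_cancel₀ _ hρ.ne'] at this
    linarith

lemma continuous_cappedLogPartition (hρ : 0 < ρ) : Continuous (cappedLogPartition ρ) := by
  have hscale : Continuous (massScale ρ) :=
    continuous_const.div (continuous_id.max continuous_const) fun Z =>
      (hρ.trans_le (le_max_right Z ρ)).ne'
  exact (hscale.mul continuous_id).sub
    (continuous_const.mul (hscale.log fun Z => (massScale_pos hρ Z).ne'))

end CappedLogPartition

section Gibbs

variable {α : Type*} [MeasurableSpace α] {μ Λ : Measure α} {G : α → ℝ} {r : ℝ}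

def gibbsMeasure (μ : Measure α) (G : α → ℝ) (r : ℝ) : Measure α := ENNReal.ofReal r • μ.tilted G

lemma gibbsMeasure_absolutelyContinuous : gibbsMeasure μ G r ≪ μ :=
  (tilted_absolutelyContinuous μ G).smul_left _

instance : IsFiniteMeasure (gibbsMeasure μ G r) := by
  rw [gibbsMeasure, ENNReal.ofReal, Measure.coe_nnreal_smul]
  infer_instance

lemma gibbsMeasure_real_univ [NeZero μ] (hexp : Integrable (fun ξ => exp (G ξ)) μ)
    (hr : 0 ≤ r) : (gibbsMeasure μ G r).real univ = r := by
  have := isProbabilityMeasure_tilted hexp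
  simp [gibbsMeasure, measureReal_def, hr]

lemma integral_gibbsMeasure (hr : 0 ≤ r) (h : α → ℝ) :
    ∫ ξ, h ξ ∂gibbsMeasure μ G r = r * ∫ ξ, h ξ ∂μ.tilted G := by
  simp [gibbsMeasure, integral_smul_measure, hr]

lemma llr_gibbsMeasure_left [SigmaFinite μ] (hexp : Integrable (fun ξ => exp (G ξ)) μ)
    (hr : 0 < r) :
    llr (gibbsMeasure μ G r) μ =ᵐ[gibbsMeasure μ G r]
      fun ξ => G ξ - log (∫ ξ, exp (G ξ) ∂μ) + log r := by
  have hΓt : gibbsMeasure μ G r ≪ μ.tilted G := Measure.AbsolutelyContinuous.rfl.smul_left _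
  filter_upwards [hΓt.ae_le (llr_smul_left (tilted_absolutelyContinuous μ G) (ENNReal.ofReal r)
      (by simpa using hr) ENNReal.ofReal_ne_top),
    gibbsMeasure_absolutelyContinuous.ae_le (log_rnDeriv_tilted_left_self hexp)]
    with ξ hsmul htilt
  rw [gibbsMeasure, hsmul, llr, htilt, ENNReal.toReal_ofReal hr.le]

lemma llr_gibbsMeasure_right [IsFiniteMeasure Λ] [SigmaFinite μ] (hΛμ : Λ ≪ μ)
    (hexp : Integrable (fun ξ => exp (G ξ)) μ) (hr : 0 < r) :
    llr Λ (gibbsMeasure μ G r) =ᵐ[Λ]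
      fun ξ => llr Λ μ ξ - G ξ + log (∫ ξ, exp (G ξ) ∂μ) - log r := by
  have hΛt : Λ ≪ μ.tilted G := hΛμ.trans (absolutelyContinuous_tilted hexp)
  filter_upwards [llr_smul_right hΛt (ENNReal.ofReal r) (by simpa using hr) ENNReal.ofReal_ne_top,
    llr_tilted_right hΛμ hexp] with ξ hsmul htilt
  rw [gibbsMeasure, hsmul, htilt, ENNReal.toReal_ofReal hr.le]
  ring

lemma integrable_llr_gibbsMeasure [SigmaFinite μ] (hexp : Integrable (fun ξ => exp (G ξ)) μ)
    (hG : Integrable G (gibbsMeasure μ G r)) (hr : 0 < r) :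
    Integrable (llr (gibbsMeasure μ G r) μ) (gibbsMeasure μ G r) :=
  ((hG.sub (integrable_const _)).add (integrable_const _)).congr
    (llr_gibbsMeasure_left hexp hr).symm

variable [IsFiniteMeasure μ] [NeZero μ]

lemma integral_sub_integral_llr_add_le [IsFiniteMeasure Λ] (hΛμ : Λ ≪ μ)
    (hG : Integrable G Λ) (hexp : Integrable (fun ξ => exp (G ξ)) μ)
    (hllr : Integrable (llr Λ μ) Λ) (hr : 0 < r) :
    ∫ ξ, G ξ ∂Λ - ∫ ξ, llr Λ μ ξ ∂Λ + Λ.real univ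
      ≤ r + Λ.real univ * log ((∫ ξ, exp (G ξ) ∂μ) / r) := by
  have hΛΓ : Λ ≪ gibbsMeasure μ G r :=
    (hΛμ.trans (absolutelyContinuous_tilted hexp)).smul_right (by simpa using hr)
  have hllr' := llr_gibbsMeasure_right hΛμ hexp hr
  have hint : Integrable (llr Λ (gibbsMeasure μ G r)) Λ :=
    (((hllr.sub hG).add (integrable_const _)).sub (integrable_const _)).congr hllr'.symm
  have hgibbs := integral_llr_add_sub_measure_univ_nonneg hΛΓ hint
  rw [integral_congr_ae hllr', integral_sub (f := fun ξ => llr Λ μ ξ - G ξ + _)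
    ((hllr.sub hG).add (integrable_const _)) (integrable_const _),
    integral_add (f := fun ξ => llr Λ μ ξ - G ξ) (hllr.sub hG) (integrable_const _),
    integral_sub hllr hG, integral_const, integral_const, gibbsMeasure_real_univ hexp hr.le,
    smul_eq_mul, smul_eq_mul] at hgibbs
  rw [log_div (integral_exp_pos hexp).ne' hr.ne']
  linarith

lemma integral_sub_integral_llr_add_gibbsMeasure (hexp : Integrable (fun ξ => exp (G ξ)) μ)
    (hG : Integrable G (gibbsMeasure μ G r)) (hr : 0 < r) :
    ∫ ξ, G ξ ∂gibbsMeasure μ G r - ∫ ξ, llr (gibbsMeasure μ G r) μ ξ ∂gibbsMeasure μ G r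
      + (gibbsMeasure μ G r).real univ = r + r * log ((∫ ξ, exp (G ξ) ∂μ) / r) := by
  rw [integral_congr_ae (llr_gibbsMeasure_left hexp hr),
    integral_add (f := fun ξ => G ξ - _) (hG.sub (integrable_const _)) (integrable_const _),
    integral_sub hG (integrable_const _), integral_const, integral_const,
    gibbsMeasure_real_univ hexp hr.le, smul_eq_mul, smul_eq_mul,
    log_div (integral_exp_pos hexp).ne' hr.ne']
  ring

end Gibbs

section Bprox

variable {α : Type*} [MeasurableSpace α] {Λ Γ : Measure α}

lemma Bprox_univ_of_integrable (hΛΓ : Λ ≪ Γ) (h : Integrable (llr Λ Γ) Λ) :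
    Bprox univ Λ Γ = ((∫ ξ, llr Λ Γ ξ ∂Λ - (Λ.real univ - Γ.real univ) : ℝ) : EReal) := by
  rw [Bprox, if_pos ⟨hΛΓ, h.integrableOn⟩, setIntegral_univ]
  rfl

lemma coe_sub_mul_Bprox_univ_eq_bot {κ : ℝ} (hκ : 0 < κ)
    (h : ¬(Λ ≪ Γ ∧ Integrable (llr Λ Γ) Λ)) (a : ℝ) :
    (a : EReal) - κ * Bprox univ Λ Γ = ⊥ := by
  rw [Bprox, if_neg (by rwa [integrableOn_univ]), EReal.coe_mul_top_of_pos hκ, EReal.sub_top]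

lemma Bprox_of_ae_mem {Ξ : Set α} (hΛ : ∀ᵐ ξ ∂Λ, ξ ∈ Ξ) (hΓ : ∀ᵐ ξ ∂Γ, ξ ∈ Ξ) :
    Bprox Ξ Λ Γ = Bprox univ Λ Γ := by
  have hΛΞ : Λ Ξ = Λ univ := by
    rw [← Measure.restrict_apply_univ, Measure.restrict_eq_self_of_ae_mem hΛ]
  have hΓΞ : Γ Ξ = Γ univ := by
    rw [← Measure.restrict_apply_univ, Measure.restrict_eq_self_of_ae_mem hΓ]
  simp only [Bprox, IntegrableOn, Measure.restrict_eq_self_of_ae_mem hΛ, Measure.restrict_univ,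
    hΛΞ, hΓΞ]

end Bprox

section Bounded

variable {α : Type*} [MeasurableSpace α] {μ Λ : Measure α} {h : α → ℝ} {K : ℝ}

lemma integrable_of_abs_le [IsFiniteMeasure Λ] (hΛμ : Λ ≪ μ) (hh : AEStronglyMeasurable h μ)
    (hK : ∀ᵐ ξ ∂μ, |h ξ| ≤ K) : Integrable h Λ :=
  Integrable.of_bound (hh.mono_ac hΛμ) K (hΛμ.ae_le hK)

lemma integrable_exp_of_le [IsFiniteMeasure μ] (hh : AEStronglyMeasurable h μ)
    (hK : ∀ᵐ ξ ∂μ, h ξ ≤ K) : Integrable (fun ξ => exp (h ξ)) μ := by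
  refine Integrable.of_bound (continuous_exp.comp_aestronglyMeasurable hh) (exp K) ?_
  filter_upwards [hK] with ξ hξ
  rw [norm_of_nonneg (exp_pos _).le]
  exact exp_le_exp.2 hξ

lemma integrable_exp_div_of_abs_le [IsFiniteMeasure μ] (hh : AEStronglyMeasurable h μ)
    (hK : ∀ᵐ ξ ∂μ, |h ξ| ≤ K) {κ : ℝ} (hκ : 0 < κ) : Integrable (fun ξ => exp (h ξ / κ)) μ :=
  integrable_exp_of_le (K := K / κ) (by fun_prop) <| hK.mono fun _ hξ =>
    div_le_div_of_nonneg_right (le_of_abs_le hξ) hκ.le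

end Bounded

section RegularizedDual

variable {α : Type*} [MeasurableSpace α] {μ Λ : Measure α} {h : α → ℝ} {K κ ρ : ℝ}

/-- The maximizer of `Λ ↦ ∫ h dΛ - κ B(Λ, μ)` over measures of mass at most `ρ`: the Gibbs
measure `∝ exp (h / κ) μ`, of mass `min (∫ exp (h / κ) dμ, ρ)`. -/
def cappedGibbsMeasure (μ : Measure α) (κ ρ : ℝ) (h : α → ℝ) : Measure α :=
  gibbsMeasure μ (fun ξ => h ξ / κ)
    (massScale ρ (∫ ξ, exp (h ξ / κ) ∂μ) * ∫ ξ, exp (h ξ / κ) ∂μ)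

instance : IsFiniteMeasure (cappedGibbsMeasure μ κ ρ h) := by
  rw [cappedGibbsMeasure]
  infer_instance

variable [IsFiniteMeasure μ] [NeZero μ] (hκ : 0 < κ) (hρ : 0 < ρ) (hh : AEStronglyMeasurable h μ)
  (hK : ∀ᵐ ξ ∂μ, |h ξ| ≤ K)
include hκ hρ hh hK

lemma cappedGibbsMeasure_univ_le : cappedGibbsMeasure μ κ ρ h univ ≤ ENNReal.ofReal ρ := by
  have := isProbabilityMeasure_tilted (integrable_exp_div_of_abs_le hh hK hκ)
  simp only [cappedGibbsMeasure, gibbsMeasure, Measure.smul_apply, measure_univ, smul_eq_mul,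
    mul_one]
  exact ENNReal.ofReal_le_ofReal (massScale_mul_le hρ _)

lemma coe_add_integral_sub_mul_Bprox_le [IsFiniteMeasure Λ] (hΛ : Λ univ ≤ ENNReal.ofReal ρ)
    (a : ℝ) :
    ((a + ∫ ξ, h ξ ∂Λ : ℝ) : EReal) - κ * Bprox univ Λ μ ≤
      ((a + κ * (cappedLogPartition ρ (∫ ξ, exp (h ξ / κ) ∂μ) - μ.real univ) : ℝ) : EReal) := by
  by_cases hB : Λ ≪ μ ∧ Integrable (llr Λ μ) Λ
  swap
  · rw [coe_sub_mul_Bprox_univ_eq_bot hκ hB]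
    exact bot_le
  obtain ⟨hΛμ, hllr⟩ := hB
  have hexp := integrable_exp_div_of_abs_le hh hK hκ
  set Z := ∫ ξ, exp (h ξ / κ) ∂μ
  have hc := massScale_pos hρ Z
  have hZ : 0 < Z := integral_exp_pos hexp
  have hgibbs := integral_sub_integral_llr_add_le hΛμ
    ((integrable_of_abs_le hΛμ hh hK).div_const κ) hexp hllr (mul_pos hc hZ)
  rw [integral_div, div_mul_cancel_right₀ hZ.ne', log_inv] at hgibbs
  have hm : Λ.real univ ≤ ρ := ENNReal.toReal_le_of_le_ofReal hρ.le hΛ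
  have hlogc := mul_le_mul_of_nonpos_right hm (log_nonpos hc.le (massScale_le_one hρ Z))
  rw [Bprox_univ_of_integrable hΛμ hllr, ← EReal.coe_mul, ← EReal.coe_sub, EReal.coe_le_coe_iff,
    cappedLogPartition]
  have hI : ∫ ξ, h ξ ∂Λ = κ * ((∫ ξ, h ξ ∂Λ) / κ) := by field_simp
  nlinarith [mul_le_mul_of_nonneg_left hgibbs hκ.le, mul_le_mul_of_nonneg_left hlogc hκ.le]

lemma coe_add_integral_sub_mul_Bprox_cappedGibbsMeasure (a : ℝ) :
    ((a + ∫ ξ, h ξ ∂cappedGibbsMeasure μ κ ρ h : ℝ) : EReal)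
        - κ * Bprox univ (cappedGibbsMeasure μ κ ρ h) μ =
      ((a + κ * (cappedLogPartition ρ (∫ ξ, exp (h ξ / κ) ∂μ) - μ.real univ) : ℝ) : EReal) := by
  rw [cappedGibbsMeasure]
  have hexp := integrable_exp_div_of_abs_le hh hK hκ
  set Z := ∫ ξ, exp (h ξ / κ) ∂μ
  have hZ : 0 < Z := integral_exp_pos hexp
  have hr := mul_pos (massScale_pos hρ Z) hZ
  set Λs := gibbsMeasure μ (fun ξ => h ξ / κ) (massScale ρ Z * Z)
  have hG : Integrable (fun ξ => h ξ / κ) Λs :=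
    (integrable_of_abs_le gibbsMeasure_absolutelyContinuous hh hK).div_const κ
  have hval := integral_sub_integral_llr_add_gibbsMeasure hexp hG hr
  rw [integral_div, div_mul_cancel_right₀ hZ.ne', log_inv] at hval
  rw [Bprox_univ_of_integrable gibbsMeasure_absolutelyContinuous
      (integrable_llr_gibbsMeasure hexp hG hr), ← EReal.coe_mul, ← EReal.coe_sub,
    cappedLogPartition, ← massScale_mul_mul_log hρ Z]
  congr 1
  have hI : ∫ ξ, h ξ ∂Λs = κ * ((∫ ξ, h ξ ∂Λs) / κ) := by field_simp
  rw [hI]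
  linear_combination κ * hval

end RegularizedDual

lemma nonneg_of_hasDerivAt_of_isMinOn {F : ℝ → ℝ} {F' : ℝ} (hF : HasDerivAt F F' 0)
    (hmin : IsMinOn F (Icc 0 1) 0) : 0 ≤ F' := by
  have := hmin.localize.hasFDerivWithinAt_nonneg hF.hasDerivWithinAt.hasFDerivWithinAt
    (y := 1) (mem_posTangentConeAt_of_segment_subset (by simp [segment_eq_Icc]))
  simpa using this

lemma hasDerivAt_mgf_zero_of_abs_le {α : Type*} [MeasurableSpace α] {ν : Measure α}
    [IsFiniteMeasure ν] {H : α → ℝ} {K : ℝ} (hH : AEMeasurable H ν)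
    (hK : ∀ᵐ ξ ∂ν, |H ξ| ≤ K) : HasDerivAt (mgf H ν) (∫ ξ, H ξ ∂ν) 0 := by
  have hset : integrableExpSet H ν = univ := eq_univ_of_forall fun _ =>
    integrable_exp_mul_of_mem_Icc hH (hK.mono fun _ hξ => abs_le.1 hξ)
  simpa using hasDerivAt_mgf (t := 0) (by simp [hset])

section FirstOrder

variable {E : Type*} [AddCommGroup E] [Module ℝ E] {α : Type*} [MeasurableSpace α]
  {μ : Measure α} [IsFiniteMeasure μ] [NeZero μ] {X : Set E} {f : E → ℝ} {g : E → α → ℝ}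
  {K κ ρ : ℝ} {xs x : E}
  (hX : Convex ℝ X) (hg_meas : ∀ x ∈ X, AEStronglyMeasurable (g x) μ)
  (hg_bdd : ∀ x ∈ X, ∀ᵐ ξ ∂μ, |g x ξ| ≤ K) (hg_conv : ∀ᵐ ξ ∂μ, ConvexOn ℝ X fun x => g x ξ)
  (hκ : 0 < κ) (hxs : xs ∈ X) (hx : x ∈ X)
include hX hg_meas hg_bdd hg_conv hκ hxs hx

lemma integral_exp_convexComb_le_mul_mgf {t : ℝ} (ht : t ∈ Icc (0 : ℝ) 1) :
    ∫ ξ, exp (g ((1 - t) • xs + t • x) ξ / κ) ∂μ ≤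
      (∫ ξ, exp (g xs ξ / κ) ∂μ) *
        mgf (fun ξ => (g x ξ - g xs ξ) / κ) (μ.tilted fun ξ => g xs ξ / κ) t := by
  have hxt : (1 - t) • xs + t • x ∈ X := hX hxs hx (by linarith [ht.2]) ht.1 (by ring)
  have hexp := integrable_exp_div_of_abs_le (hg_meas xs hxs) (hg_bdd xs hxs) hκ
  rw [mgf, integral_exp_tilted, mul_div_cancel₀ _ (integral_exp_pos hexp).ne']
  have hcomb : ∀ ξ, ((fun ξ => g xs ξ / κ) + fun ξ => t * ((g x ξ - g xs ξ) / κ)) ξ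
      = ((1 - t) * g xs ξ + t * g x ξ) / κ := fun ξ => by
    simp only [Pi.add_apply]
    field_simp
    ring
  simp only [hcomb]
  have := hg_meas xs hxs
  have := hg_meas x hx
  refine integral_mono_ae (integrable_exp_div_of_abs_le (hg_meas _ hxt) (hg_bdd _ hxt) hκ)
    (integrable_exp_of_le (K := K / κ) (by fun_prop) ?_) ?_
  · filter_upwards [hg_bdd xs hxs, hg_bdd x hx] with ξ hxsξ hxξ
    refine div_le_div_of_nonneg_right ?_ hκ.le
    nlinarith [le_of_abs_le hxsξ, le_of_abs_le hxξ, ht.1, ht.2]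
  · filter_upwards [hg_conv] with ξ hξ
    refine exp_le_exp.2 (div_le_div_of_nonneg_right ?_ hκ.le)
    simpa using hξ.2 hxs hx (by linarith [ht.2]) ht.1 (by ring)

variable (hf : ConvexOn ℝ X f) (hρ : 0 < ρ)
  (hmin : IsMinOn (fun x => f x + κ * cappedLogPartition ρ (∫ ξ, exp (g x ξ / κ) ∂μ)) X xs)
include hf hρ hmin

/-- Minimality of `xs` along the segment `[xs, x]`, after bounding `cappedLogPartition` by its
tangent line at `Z` (`cappedLogPartition_le`) and using convexity of `g`. -/
lemma add_mul_le_add_mul_mgf {t : ℝ} (ht : t ∈ Icc (0 : ℝ) 1) :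
    let Z := ∫ ξ, exp (g xs ξ / κ) ∂μ
    f xs + κ * (massScale ρ Z * Z) ≤ (1 - t) * f xs + t * f x + κ * (massScale ρ Z * Z) *
      mgf (fun ξ => (g x ξ - g xs ξ) / κ) (μ.tilted fun ξ => g xs ξ / κ) t := by
  intro Z
  have hxt : (1 - t) • xs + t • x ∈ X := hX hxs hx (by linarith [ht.2]) ht.1 (by ring)
  set Zt := ∫ ξ, exp (g ((1 - t) • xs + t • x) ξ / κ) ∂μ
  have hc := massScale_pos hρ Z
  have hmin_t : f xs + κ * cappedLogPartition ρ Z ≤ f ((1 - t) • xs + t • x)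
      + κ * cappedLogPartition ρ Zt := isMinOn_iff.1 hmin _ hxt
  have hf_t : f ((1 - t) • xs + t • x) ≤ (1 - t) * f xs + t * f x :=
    hf.2 hxs hx (by linarith [ht.2] : 0 ≤ 1 - t) ht.1 (by ring)
  have htangent := cappedLogPartition_le hρ hc (massScale_le_one hρ Z) Zt
  have hZ_t := integral_exp_convexComb_le_mul_mgf hX hg_meas hg_bdd hg_conv hκ hxs hx ht
  rw [cappedLogPartition] at hmin_t
  nlinarith [mul_le_mul_of_nonneg_left hZ_t hc.le, mul_le_mul_of_nonneg_left htangent hκ.le]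

lemma add_integral_cappedGibbsMeasure_le :
    f xs + ∫ ξ, g xs ξ ∂cappedGibbsMeasure μ κ ρ (g xs)
      ≤ f x + ∫ ξ, g x ξ ∂cappedGibbsMeasure μ κ ρ (g xs) := by
  set G := fun ξ => g xs ξ / κ
  set H := fun ξ => (g x ξ - g xs ξ) / κ
  set r := massScale ρ (∫ ξ, exp (G ξ) ∂μ) * ∫ ξ, exp (G ξ) ∂μ
  have hexp := integrable_exp_div_of_abs_le (hg_meas xs hxs) (hg_bdd xs hxs) hκ
  have hr : 0 < r := mul_pos (massScale_pos hρ _) (integral_exp_pos hexp)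
  have := isProbabilityMeasure_tilted hexp
  have hH : HasDerivAt (mgf H (μ.tilted G)) (∫ ξ, H ξ ∂μ.tilted G) 0 := by
    have := hg_meas xs hxs
    have := hg_meas x hx
    refine hasDerivAt_mgf_zero_of_abs_le (K := 2 * K / κ)
      ((by fun_prop : AEMeasurable H μ).mono_ac (tilted_absolutelyContinuous μ G))
      ((tilted_absolutelyContinuous μ G).ae_le ?_)
    filter_upwards [hg_bdd xs hxs, hg_bdd x hx] with ξ hxsξ hxξ
    rw [abs_div, abs_of_pos hκ]
    exact div_le_div_of_nonneg_right ((abs_sub _ _).trans (by linarith)) hκ.le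
  set F := fun t => t * (f x - f xs) + κ * r * mgf H (μ.tilted G) t
  have hF : HasDerivAt F (f x - f xs + κ * r * ∫ ξ, H ξ ∂μ.tilted G) 0 := by
    have := ((hasDerivAt_id (0 : ℝ)).mul_const (f x - f xs)).fun_add (hH.const_mul (κ * r))
    simpa only [id, one_mul] using this
  have hFmin : IsMinOn F (Icc 0 1) 0 := isMinOn_iff.2 fun t ht => by
    have := add_mul_le_add_mul_mgf hX hg_meas hg_bdd hg_conv hκ hxs hx hf hρ hmin ht
    simp only [F, mgf_zero, zero_mul, zero_add, mul_one]
    linarith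
  have hΛsμ : cappedGibbsMeasure μ κ ρ (g xs) ≪ μ := gibbsMeasure_absolutelyContinuous
  have hint : ∫ ξ, g x ξ ∂cappedGibbsMeasure μ κ ρ (g xs)
      - ∫ ξ, g xs ξ ∂cappedGibbsMeasure μ κ ρ (g xs) = κ * r * ∫ ξ, H ξ ∂μ.tilted G := by
    rw [← integral_sub (integrable_of_abs_le hΛsμ (hg_meas x hx) (hg_bdd x hx))
      (integrable_of_abs_le hΛsμ (hg_meas xs hxs) (hg_bdd xs hxs)), cappedGibbsMeasure,
      integral_gibbsMeasure hr.le, integral_div]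
    field_simp
    rfl
  linarith [nonneg_of_hasDerivAt_of_isMinOn hF hFmin]

end FirstOrder

theorem exists_isSaddlePointOn_regularizedLagrangian {E : Type*} [AddCommGroup E] [Module ℝ E]
    [TopologicalSpace E] [FirstCountableTopology E] {α : Type*} [MeasurableSpace α]
    {μ : Measure α} [IsFiniteMeasure μ] [NeZero μ] {X : Set E} (hXconv : Convex ℝ X)
    (hXcomp : IsCompact X) (hXne : X.Nonempty) {f : E → ℝ} (hfconv : ConvexOn ℝ X f)
    (hfcont : ContinuousOn f X) {g : E → α → ℝ} (hg_meas : ∀ x ∈ X, AEStronglyMeasurable (g x) μ)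
    {K : ℝ} (hg_bdd : ∀ x ∈ X, ∀ᵐ ξ ∂μ, |g x ξ| ≤ K)
    (hg_cont : ∀ᵐ ξ ∂μ, ContinuousOn (fun x => g x ξ) X)
    (hg_conv : ∀ᵐ ξ ∂μ, ConvexOn ℝ X fun x => g x ξ) {κ ρ : ℝ} (hκ : 0 < κ) (hρ : 0 < ρ) :
    ∃ xs ∈ X, ∃ Λs, Λs ≪ μ ∧ IsFiniteMeasure Λs ∧ Λs univ ≤ ENNReal.ofReal ρ ∧
      IsSaddlePointOn X {Λ | IsFiniteMeasure Λ ∧ Λ univ ≤ ENNReal.ofReal ρ}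
        (fun x Λ => ((f x + ∫ ξ, g x ξ ∂Λ : ℝ) : EReal) - κ * Bprox univ Λ μ) xs Λs := by
  have hZ : ContinuousOn (fun x => ∫ ξ, exp (g x ξ / κ) ∂μ) X := by
    refine continuousOn_of_dominated (bound := fun _ => exp (K / κ)) (fun x hx => by
      have := hg_meas x hx; fun_prop) (fun x hx => (hg_bdd x hx).mono fun ξ hξ => ?_)
      (integrable_const _) (hg_cont.mono fun ξ hξ => continuous_exp.comp_continuousOn
        (hξ.div_const κ))
    rw [norm_of_nonneg (exp_pos _).le]
    exact exp_le_exp.2 (div_le_div_of_nonneg_right (le_of_abs_le hξ) hκ.le)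
  obtain ⟨xs, hxs, hmin⟩ := hXcomp.exists_isMinOn hXne
    (hfcont.add (continuousOn_const.mul ((continuous_cappedLogPartition hρ).comp_continuousOn hZ)))
  refine ⟨xs, hxs, cappedGibbsMeasure μ κ ρ (g xs), gibbsMeasure_absolutelyContinuous,
    inferInstance, cappedGibbsMeasure_univ_le hκ hρ (hg_meas xs hxs) (hg_bdd xs hxs), ?_⟩
  rintro x hx Λ ⟨hΛ, hΛρ⟩
  calc _ ≤ _ := coe_add_integral_sub_mul_Bprox_le hκ hρ (hg_meas xs hxs) (hg_bdd xs hxs) hΛρ _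
    _ = _ := (coe_add_integral_sub_mul_Bprox_cappedGibbsMeasure hκ hρ (hg_meas xs hxs)
        (hg_bdd xs hxs) _).symm
    _ ≤ _ := EReal.sub_le_sub (EReal.coe_le_coe_iff.2 (add_integral_cappedGibbsMeasure_le hXconv
        hg_meas hg_bdd hg_conv hκ hxs hx hfconv hρ hmin)) le_rfl

lemma isFiniteMeasure_ofReal_smul_restrict {β : Type*} [MeasurableSpace β] {ν : Measure β}
    {s : Set β} (hs : ν s < ∞) (c : ℝ) : IsFiniteMeasure (ENNReal.ofReal c • ν.restrict s) :=
  ⟨by simpa using ENNReal.mul_lt_top ENNReal.ofReal_lt_top hs⟩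

lemma neZero_ofReal_smul_restrict {β : Type*} [MeasurableSpace β] {ν : Measure β}
    {s : Set β} (hs : ν s ≠ 0) {c : ℝ} (hc : 0 < c) : NeZero (ENNReal.ofReal c • ν.restrict s) :=
  ⟨by
    rw [← Measure.measure_univ_ne_zero]
    simp [hs, hc]⟩

/-- Existence of a saddle point of the regularized Lagrangian
`L_κ(x,Λ) = f(x) + ∫_Ξ g(x,ξ) dΛ(ξ) − κ B(Λ,Λ_u)` on `X × V`,
where `V = {Λ ∈ M₊(Ξ) : Λ(Ξ) ≤ ρ̄}`, together with the minimax equalities. -/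
theorem stmt_15 {m d : ℕ}
    (X : Set (EuclideanSpace ℝ (Fin m))) (Ξ : Set (EuclideanSpace ℝ (Fin d)))
    (hXconv : Convex ℝ X) (hXcomp : IsCompact X) (hXne : X.Nonempty)
    (hΞcomp : IsCompact Ξ) (hvol : 0 < volume Ξ)
    (f : EuclideanSpace ℝ (Fin m) → ℝ)
    (g : EuclideanSpace ℝ (Fin m) → EuclideanSpace ℝ (Fin d) → ℝ)
    (hfconv : ConvexOn ℝ X f) (hfcont : ContinuousOn f X)
    (hgcont : ContinuousOn (fun p : EuclideanSpace ℝ (Fin m) × EuclideanSpace ℝ (Fin d) =>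
      g p.1 p.2) (X ×ˢ Ξ))
    (hgconv : ∀ ξ ∈ Ξ, ConvexOn ℝ X fun x => g x ξ)
    (κ : ℝ) (hκ : κ ∈ Set.Ioc (0 : ℝ) 1)
    (ρbar ρ0 : ℝ) (hρbar : 0 < ρbar) (hρ0 : ρ0 ∈ Set.Ioc (0 : ℝ) ρbar) :
    -- `Λ_u` : the measure with constant Lebesgue density `ρ₀ / vol(Ξ)` on `Ξ`
    let Λu : Measure (EuclideanSpace ℝ (Fin d)) :=
      ENNReal.ofReal (ρ0 / (volume Ξ).toReal) • volume.restrict Ξ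
    -- the dual feasible set `V`
    let V : Set (Measure (EuclideanSpace ℝ (Fin d))) :=
      {Λ | IsFiniteMeasure Λ ∧ Λ Ξᶜ = 0 ∧ Λ Ξ ≤ ENNReal.ofReal ρbar}
    -- the regularized Lagrangian, with values in `EReal`
    let Lκ : EuclideanSpace ℝ (Fin m) → Measure (EuclideanSpace ℝ (Fin d)) → EReal :=
      fun x Λ => ((f x + ∫ ξ in Ξ, g x ξ ∂Λ : ℝ) : EReal) - (κ : EReal) * Bprox Ξ Λ Λu
    ∃ xs ∈ X, ∃ Λs ∈ V,
      (∀ Λ ∈ V, Lκ xs Λ ≤ Lκ xs Λs) ∧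
      (∀ x ∈ X, Lκ xs Λs ≤ Lκ x Λs) ∧
      (⨅ x ∈ X, ⨆ Λ ∈ V, Lκ x Λ) = Lκ xs Λs ∧
      (⨆ Λ ∈ V, ⨅ x ∈ X, Lκ x Λ) = Lκ xs Λs := by
  intro Λu V Lκ
  have hΞ : MeasurableSet Ξ := hΞcomp.isClosed.measurableSet
  have hΛuΞ : Λu Ξᶜ = 0 := by simp [Λu, Measure.restrict_apply hΞ.compl]
  have hΛu_ae : ∀ᵐ ξ ∂Λu, ξ ∈ Ξ := mem_ae_iff.2 hΛuΞ
  have hvolΞ : volume Ξ < ∞ := hΞcomp.measure_lt_top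
  have := isFiniteMeasure_ofReal_smul_restrict hvolΞ (ρ0 / (volume Ξ).toReal)
  have := neZero_ofReal_smul_restrict hvol.ne'
    (div_pos hρ0.1 (ENNReal.toReal_pos hvol.ne' hvolΞ.ne))
  obtain ⟨K, hK⟩ := (hXcomp.prod hΞcomp).exists_bound_of_continuousOn hgcont
  obtain ⟨xs, hxs, Λs, hΛsu, hΛs, hΛsρ, hsaddle⟩ :=
    exists_isSaddlePointOn_regularizedLagrangian (μ := Λu) hXconv hXcomp hXne hfconv hfcont
      (fun x hx => ((hgcont.comp (continuousOn_const.prodMk continuousOn_id)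
        fun ξ hξ => ⟨hx, hξ⟩).aestronglyMeasurable hΞ).smul_measure _)
      (fun x hx => hΛu_ae.mono fun ξ hξ => by simpa using hK (x, ξ) ⟨hx, hξ⟩)
      (hΛu_ae.mono fun ξ hξ => hgcont.comp (continuousOn_id.prodMk continuousOn_const)
        fun x hx => ⟨hx, hξ⟩)
      (hΛu_ae.mono hgconv) hκ.1 hρbar
  have hmass : ∀ Λ : Measure (EuclideanSpace ℝ (Fin d)), Λ Ξᶜ = 0 → Λ Ξ = Λ univ :=
    fun Λ hΛ => measure_congr (ae_eq_univ.2 hΛ)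
  have hΛsV : Λs ∈ V := ⟨hΛs, hΛsu hΛuΞ, (hmass Λs (hΛsu hΛuΞ)).trans_le hΛsρ⟩
  have hsaddleV : IsSaddlePointOn X V Lκ xs Λs := fun x hx Λ hΛ => by
    simp only [Lκ, Measure.restrict_eq_self_of_ae_mem (mem_ae_iff.2 hΛ.2.1),
      Measure.restrict_eq_self_of_ae_mem (mem_ae_iff.2 hΛsV.2.1),
      Bprox_of_ae_mem (mem_ae_iff.2 hΛ.2.1) hΛu_ae, Bprox_of_ae_mem (mem_ae_iff.2 hΛsV.2.1) hΛu_ae]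
    exact hsaddle x hx Λ ⟨hΛ.1, (hmass Λ hΛ.2.1).symm.trans_le hΛ.2.2⟩
  exact ⟨xs, hxs, Λs, hΛsV, fun Λ hΛ => hsaddleV xs hxs Λ hΛ,
    fun x hx => hsaddleV x hx Λs hΛsV, isSaddlePointOn_value hxs hΛsV hsaddleV⟩
end
end
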